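/- arXiv:1404.3395 — 5 statements merged into one kernel-verified Lean document; each statement's English description precedes it below -/
import Mathlib

section
/- For integers n ≥ 2 and 1 ≤ k ≤ n-1, the set S₂(n,k) of nested sets of cardinality k in P₂({1,...,n}) is in bijection with the set T₂(n+k-1,k) of partitions of {1,...,n+k-1} into k parts each of cardinality at least 2. -/
/-- A nested set of `P₂({1,...,n})` with `k` elements: a family of subsets of
`{1,...,n}`, each of cardinality ≥ 2, containing `{1,...,n}`, any two of which
are nested or disjoint. -/
def IsNested2 (n k : ℕ) (S : Finset (Finset ℕ)) : Prop :=
  S.card = k ∧ Finset.Icc 1 n ∈ S ∧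
  (∀ A ∈ S, A ⊆ Finset.Icc 1 n ∧ 2 ≤ A.card) ∧
  (∀ A ∈ S, ∀ B ∈ S, A ⊆ B ∨ B ⊆ A ∨ Disjoint A B)

/-- A partition of `{1,...,m}` into `k` blocks, each of cardinality ≥ 2. -/
def IsPart2 (m k : ℕ) (P : Finset (Finset ℕ)) : Prop :=
  P.card = k ∧ (∀ A ∈ P, 2 ≤ A.card) ∧
  (∀ A ∈ P, ∀ B ∈ P, A ≠ B → Disjoint A B) ∧
  P.biUnion id = Finset.Icc 1 m

/-!
A nested set is dismantled one minimal member at a time: collapsing a minimal member `A` of a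
nested set on `V` to a fresh point `t` turns the other members into a nested set on
`(V \ A) ∪ {t}` with one member fewer, and `A` is kept as a block. When a single member is left
it becomes the last block, and the `k - 1` fresh points make the ground set of the partition
`{1, …, n + k - 1}`. Every other member contains the minimal `A` or avoids it, so collapsing is
invertible; and the blocks made of old points only are exactly the minimal members, which tells
the inverse map which block to blow back up.
-/

open Finset

namespace NestedSet

section Pullback

variable {α β : Type*} [DecidableEq β] (φ : α → β) (U : Finset α)

def pullback (M : Finset β) : Finset α := U.filter (φ · ∈ M)

variable {φ U} {M N : Finset β}

@[simp]
lemma mem_pullback {x : α} : x ∈ pullback φ U M ↔ x ∈ U ∧ φ x ∈ M := mem_filter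

lemma pullback_mono (h : M ⊆ N) : pullback φ U M ⊆ pullback φ U N :=
  fun _ hx => by simp only [mem_pullback] at hx ⊢; exact ⟨hx.1, h hx.2⟩

lemma disjoint_pullback (h : Disjoint M N) : Disjoint (pullback φ U M) (pullback φ U N) :=
  disjoint_left.2 fun _ hxM hxN =>
    disjoint_left.1 h (mem_pullback.1 hxM).2 (mem_pullback.1 hxN).2

lemma image_pullback (hM : M ⊆ U.image φ) : (pullback φ U M).image φ = M := by
  ext y
  simp only [mem_image, mem_pullback]
  constructor
  · rintro ⟨x, ⟨-, hx⟩, rfl⟩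
    exact hx
  · intro hy
    obtain ⟨x, hx, rfl⟩ := mem_image.1 (hM hy)
    exact ⟨x, ⟨hx, hy⟩, rfl⟩

lemma pullback_subset_pullback_iff (hM : M ⊆ U.image φ) :
    pullback φ U M ⊆ pullback φ U N ↔ M ⊆ N := by
  refine ⟨fun h => ?_, pullback_mono⟩
  rw [← image_pullback hM]
  intro y hy
  obtain ⟨x, hx, rfl⟩ := mem_image.1 hy
  exact (mem_pullback.1 (h hx)).2

lemma disjoint_pullback_iff (hM : M ⊆ U.image φ) :
    Disjoint (pullback φ U M) (pullback φ U N) ↔ Disjoint M N := by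
  refine ⟨fun h => ?_, disjoint_pullback⟩
  rw [← image_pullback hM]
  refine disjoint_left.2 fun y hy hyN => ?_
  obtain ⟨x, hx, rfl⟩ := mem_image.1 hy
  exact disjoint_left.1 h hx (mem_pullback.2 ⟨(mem_pullback.1 hx).1, hyN⟩)

lemma card_le_card_pullback (hM : M ⊆ U.image φ) : M.card ≤ (pullback φ U M).card := by
  conv_lhs => rw [← image_pullback hM]
  exact card_image_le

lemma pullback_image {B : Finset α} (hB : B ⊆ U)
    (hsat : ∀ x ∈ U, ∀ y ∈ B, φ x = φ y → x ∈ B) : pullback φ U (B.image φ) = B := by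
  ext x
  simp only [mem_pullback, mem_image]
  constructor
  · rintro ⟨hx, y, hy, hxy⟩
    exact hsat x hx y hy hxy.symm
  · intro hx
    exact ⟨hB hx, x, hx, rfl⟩

end Pullback

section Collapse

def collapse (A : Finset ℕ) (t x : ℕ) : ℕ := if x ∈ A then t else x

/-- The inverse of `image (collapse A t)` on subsets of `range t` that contain `A` or avoid it:
the point `t` is blown back up to `A`. -/
def expand (A : Finset ℕ) (t : ℕ) (M : Finset ℕ) : Finset ℕ := pullback (collapse A t) (range t) M

variable {A B M : Finset ℕ} {t : ℕ}

lemma image_collapse_of_subset (hA : A.Nonempty) (h : A ⊆ B) :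
    B.image (collapse A t) = insert t (B \ A) := by
  ext y
  simp only [mem_image, mem_insert, mem_sdiff, collapse]
  constructor
  · rintro ⟨x, hx, rfl⟩
    split_ifs with hxA
    exacts [Or.inl rfl, Or.inr ⟨hx, hxA⟩]
  · rintro (rfl | ⟨hy, hyA⟩)
    · obtain ⟨a, ha⟩ := hA
      exact ⟨a, h ha, if_pos ha⟩
    · exact ⟨y, hy, if_neg hyA⟩

lemma image_collapse_of_disjoint (h : Disjoint A B) : B.image (collapse A t) = B := by
  conv_rhs => rw [← image_id (s := B)]
  refine image_congr fun x hx => if_neg fun hxA => disjoint_left.1 h hxA hx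

lemma expand_image_collapse (hB : B ⊆ range t) (h : A ⊆ B ∨ Disjoint A B) :
    expand A t (B.image (collapse A t)) = B := by
  refine pullback_image hB fun x hx y hy hxy => ?_
  have hxt := mem_range.1 hx
  have hyt := mem_range.1 (hB hy)
  unfold collapse at hxy
  split_ifs at hxy with hxA hyA hyA
  · rcases h with h | h
    · exact h hxA
    · exact absurd hy (disjoint_left.1 h hyA)
  · omega
  · omega
  · exact hxy ▸ hy

lemma expand_eq_self (hM : M ⊆ range t) (h : Disjoint A M) : expand A t M = M := by
  conv_lhs => rw [← image_collapse_of_disjoint (t := t) h]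
  exact expand_image_collapse hM (Or.inr h)

lemma subset_expand (hA : A ⊆ range t) (ht : t ∈ M) : A ⊆ expand A t M :=
  fun x hx => mem_pullback.2 ⟨hA hx, by simpa [collapse, hx] using ht⟩

lemma disjoint_expand (ht : t ∉ M) : Disjoint A (expand A t M) :=
  disjoint_left.2 fun x hx hxM => ht (by simpa [collapse, hx] using (mem_pullback.1 hxM).2)

end Collapse

section Nested

variable {α : Type*} [DecidableEq α]

structure IsNestedOn (V : Finset α) (S : Finset (Finset α)) : Prop where
  ground_mem : V ∈ S
  subset_ground : ∀ B ∈ S, B ⊆ V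
  two_le_card : ∀ B ∈ S, 2 ≤ B.card
  laminar : ∀ B ∈ S, ∀ C ∈ S, B ⊆ C ∨ C ⊆ B ∨ Disjoint B C

def mins (S : Finset (Finset α)) : Finset (Finset α) := S.filter fun A => ∀ B ∈ S, B ⊆ A → B = A

variable {V A B : Finset α} {S : Finset (Finset α)}

lemma mem_mins : A ∈ mins S ↔ A ∈ S ∧ ∀ B ∈ S, B ⊆ A → B = A := mem_filter

lemma mins_nonempty (h : S.Nonempty) : (mins S).Nonempty := by
  obtain ⟨A, hA, hmin⟩ := S.exists_minimal h
  exact ⟨A, mem_mins.2 ⟨hA, fun B hB hBA => le_antisymm hBA (hmin hB hBA)⟩⟩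

lemma IsNestedOn.subset_or_disjoint_of_mem_mins (hS : IsNestedOn V S) (hA : A ∈ mins S)
    (hB : B ∈ S) (hne : B ≠ A) : A ⊆ B ∨ Disjoint A B := by
  rw [mem_mins] at hA
  rcases hS.laminar A hA.1 B hB with h | h | h
  exacts [Or.inl h, absurd (hA.2 B hB h) hne, Or.inr h]

lemma IsNestedOn.eq_singleton_of_ground_mem_mins (hS : IsNestedOn V S) (hV : V ∈ mins S) :
    S = {V} :=
  eq_singleton_iff_unique_mem.2
    ⟨hS.ground_mem, fun B hB => (mem_mins.1 hV).2 B hB (hS.subset_ground B hB)⟩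

end Nested

section Expand

def expandFamily (A : Finset ℕ) (t : ℕ) (S : Finset (Finset ℕ)) : Finset (Finset ℕ) :=
  insert A (S.image (expand A t))

def contractFamily (A : Finset ℕ) (t : ℕ) (S : Finset (Finset ℕ)) : Finset (Finset ℕ) :=
  (S.erase A).image (image (collapse A t))

variable {V A M N : Finset ℕ} {t : ℕ} {S : Finset (Finset ℕ)}

lemma subset_image_collapse_range (hV : V ⊆ range t) (hA : A.Nonempty) (hAV : A ⊆ V)
    (hM : M ⊆ insert t (V \ A)) : M ⊆ (range t).image (collapse A t) := by
  rw [image_collapse_of_subset hA (hAV.trans hV)]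
  exact hM.trans (insert_subset_insert _ (sdiff_subset_sdiff hV subset_rfl))

lemma expand_insert_sdiff (hV : V ⊆ range t) (hA : A.Nonempty) (hAV : A ⊆ V) :
    expand A t (insert t (V \ A)) = V := by
  rw [← image_collapse_of_subset hA hAV]
  exact expand_image_collapse hV (Or.inl hAV)

lemma expand_eq_self_of_notMem (hV : V ⊆ range t) (hM : M ⊆ insert t (V \ A)) (ht : t ∉ M) :
    expand A t M = M := by
  have h := (subset_insert_iff_of_notMem ht).1 hM
  exact expand_eq_self (h.trans (sdiff_subset.trans hV))
    (disjoint_left.2 fun x hxA hxM => (mem_sdiff.1 (h hxM)).2 hxA)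

section

variable (hV : V ⊆ range t) (hAV : A ⊆ V) (hA : 2 ≤ A.card)
  (hS : IsNestedOn (insert t (V \ A)) S)
include hV hAV hA hS

lemma image_collapse_expand (hM : M ∈ S) :
    (expand A t M).image (collapse A t) = M :=
  image_pullback
    (subset_image_collapse_range hV (card_pos.1 (by omega)) hAV (hS.subset_ground M hM))

lemma expand_subset_expand_iff (hM : M ∈ S) :
    expand A t M ⊆ expand A t N ↔ M ⊆ N :=
  pullback_subset_pullback_iff
    (subset_image_collapse_range hV (card_pos.1 (by omega)) hAV (hS.subset_ground M hM))

lemma two_le_card_expand (hM : M ∈ S) : 2 ≤ (expand A t M).card :=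
  (hS.two_le_card M hM).trans (card_le_card_pullback
    (subset_image_collapse_range hV (card_pos.1 (by omega)) hAV (hS.subset_ground M hM)))

lemma notMem_image_expand : A ∉ S.image (expand A t) := by
  intro h
  obtain ⟨M, hM, hMA⟩ := mem_image.1 h
  have hM2 := hS.two_le_card M hM
  rw [← image_collapse_expand hV hAV hA hS hM, hMA,
    image_collapse_of_subset (card_pos.1 (by omega)) subset_rfl, Finset.sdiff_self] at hM2
  simp at hM2

lemma IsNestedOn.expandFamily : IsNestedOn V (expandFamily A t S) := by
  have hA_expand : ∀ M, A ⊆ expand A t M ∨ Disjoint A (expand A t M) := fun M => by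
    by_cases ht : t ∈ M
    exacts [Or.inl (subset_expand (hAV.trans hV) ht), Or.inr (disjoint_expand ht)]
  refine ⟨mem_insert_of_mem (mem_image.2 ⟨_, hS.ground_mem,
    expand_insert_sdiff hV (card_pos.1 (by omega)) hAV⟩), ?_, ?_, ?_⟩
  · simp only [NestedSet.expandFamily, forall_mem_insert, forall_mem_image]
    refine ⟨hAV, fun M hM => ?_⟩
    rw [← expand_insert_sdiff hV (card_pos.1 (by omega)) hAV]
    exact pullback_mono (hS.subset_ground M hM)
  · simp only [NestedSet.expandFamily, forall_mem_insert, forall_mem_image]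
    exact ⟨hA, fun M hM => two_le_card_expand hV hAV hA hS hM⟩
  · simp only [NestedSet.expandFamily, forall_mem_insert, forall_mem_image]
    refine ⟨⟨Or.inl subset_rfl, fun N _ => (hA_expand N).imp_right Or.inr⟩,
      fun M hM => ⟨?_, fun N hN => ?_⟩⟩
    · rcases hA_expand M with h | h
      exacts [Or.inr (Or.inl h), Or.inr (Or.inr h.symm)]
    · rcases hS.laminar M hM N hN with h | h | h
      exacts [Or.inl (pullback_mono h), Or.inr (Or.inl (pullback_mono h)),
        Or.inr (Or.inr (disjoint_pullback h))]

lemma card_expandFamily : (expandFamily A t S).card = S.card + 1 := by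
  rw [expandFamily, card_insert_of_notMem (notMem_image_expand hV hAV hA hS),
    card_image_of_injOn fun M hM N _ h => by
      rw [← image_collapse_expand hV hAV hA hS hM, h, image_collapse_expand hV hAV hA hS ‹_›]]

lemma contractFamily_expandFamily : contractFamily A t (expandFamily A t S) = S := by
  rw [contractFamily, expandFamily, erase_insert (notMem_image_expand hV hAV hA hS),
    image_image]
  conv_rhs => rw [← image_id (s := S)]
  exact image_congr fun M hM => image_collapse_expand hV hAV hA hS hM

lemma self_mem_mins_expandFamily : A ∈ mins (expandFamily A t S) := by
  refine mem_mins.2 ⟨mem_insert_self _ _, fun B hB hBA => ?_⟩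
  obtain rfl | ⟨M, hM, rfl⟩ := by simpa [expandFamily] using hB
  · rfl
  by_cases ht : t ∈ M
  · exact subset_antisymm hBA (subset_expand (hAV.trans hV) ht)
  · have h2 := two_le_card_expand hV hAV hA hS hM
    rw [(disjoint_expand ht).symm.eq_bot_of_le hBA] at h2
    simp at h2

lemma expand_mem_mins_expandFamily_iff (hM : M ∈ S) :
    expand A t M ∈ mins (expandFamily A t S) ↔ M ∈ mins S ∧ t ∉ M := by
  have hmem : expand A t M ∈ expandFamily A t S := mem_insert_of_mem (mem_image_of_mem _ hM)
  constructor
  · intro h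
    have hmin := (mem_mins.1 h).2
    have ht : t ∉ M := fun ht => notMem_image_expand hV hAV hA hS <| mem_image.2
      ⟨M, hM, (hmin A (mem_insert_self _ _) (subset_expand (hAV.trans hV) ht)).symm⟩
    refine ⟨mem_mins.2 ⟨hM, fun N hN hNM => ?_⟩, ht⟩
    rw [← image_collapse_expand hV hAV hA hS hN,
      hmin _ (mem_insert_of_mem (mem_image_of_mem _ hN)) (pullback_mono hNM),
      image_collapse_expand hV hAV hA hS hM]
  · rintro ⟨hmin, ht⟩
    refine mem_mins.2 ⟨hmem, fun B hB hBM => ?_⟩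
    obtain rfl | ⟨N, hN, rfl⟩ := by simpa [expandFamily] using hB
    · have hB0 := (disjoint_expand ht).eq_bot_of_le hBM
      simp [hB0] at hA
    · rw [(mem_mins.1 hmin).2 N hN ((expand_subset_expand_iff hV hAV hA hS hN).1 hBM)]

lemma mins_expandFamily :
    mins (expandFamily A t S) = insert A ((mins S).filter (t ∉ ·)) := by
  ext C
  simp only [mem_insert, mem_filter]
  constructor
  · intro hC
    obtain rfl | ⟨M, hM, rfl⟩ := by simpa [expandFamily] using (mem_filter.1 hC).1
    · exact Or.inl rfl
    · obtain ⟨hmin, ht⟩ := (expand_mem_mins_expandFamily_iff hV hAV hA hS hM).1 hC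
      rw [expand_eq_self_of_notMem hV (hS.subset_ground M hM) ht]
      exact Or.inr ⟨hmin, ht⟩
  · rintro (rfl | ⟨hC, ht⟩)
    · exact self_mem_mins_expandFamily hV hAV hA hS
    · have hCS := (mem_mins.1 hC).1
      rw [← expand_eq_self_of_notMem hV (hS.subset_ground C hCS) ht]
      exact (expand_mem_mins_expandFamily_iff hV hAV hA hS hCS).2 ⟨hC, ht⟩

end

end Expand

section Contract

variable {V A B : Finset ℕ} {t : ℕ} {S : Finset (Finset ℕ)}
  (hV : V ⊆ range t) (hS : IsNestedOn V S) (hA : A ∈ mins S)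
include hV hS hA

lemma expand_image_collapse_of_mem_erase (hB : B ∈ S.erase A) :
    expand A t (B.image (collapse A t)) = B :=
  expand_image_collapse ((hS.subset_ground B (mem_of_mem_erase hB)).trans hV)
    (hS.subset_or_disjoint_of_mem_mins hA (mem_of_mem_erase hB) (ne_of_mem_erase hB))

lemma expandFamily_contractFamily : expandFamily A t (contractFamily A t S) = S := by
  rw [expandFamily, contractFamily, image_image]
  conv_rhs => rw [← insert_erase (mem_mins.1 hA).1, ← image_id (s := S.erase A)]
  exact congrArg _ (image_congr fun B hB => expand_image_collapse_of_mem_erase hV hS hA hB)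

lemma IsNestedOn.contractFamily (hAV : A ≠ V) :
    IsNestedOn (insert t (V \ A)) (contractFamily A t S) := by
  have hAS := (mem_mins.1 hA).1
  have hA0 : A.Nonempty := card_pos.1 (by have := hS.two_le_card A hAS; omega)
  have hground := image_collapse_of_subset (t := t) hA0 (hS.subset_ground A hAS)
  have hrange : ∀ B ∈ S, B.image (collapse A t) ⊆ (range t).image (collapse A t) :=
    fun B hB => image_subset_image ((hS.subset_ground B hB).trans hV)
  refine ⟨mem_image.2 ⟨V, mem_erase.2 ⟨hAV.symm, hS.ground_mem⟩, hground⟩, ?_, ?_, ?_⟩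
  · simp only [NestedSet.contractFamily, forall_mem_image]
    intro B hB
    rw [← hground]
    exact image_subset_image (hS.subset_ground B (mem_of_mem_erase hB))
  · simp only [NestedSet.contractFamily, forall_mem_image]
    intro B hB
    have hBS := mem_of_mem_erase hB
    rcases hS.subset_or_disjoint_of_mem_mins hA hBS (ne_of_mem_erase hB) with h | h
    · have htB : t ∉ B \ A := fun ht =>
        lt_irrefl t (mem_range.1 (hV (hS.subset_ground B hBS (mem_sdiff.1 ht).1)))
      have hBA : (B \ A).Nonempty :=
        sdiff_nonempty.2 fun h' => ne_of_mem_erase hB (subset_antisymm h' h)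
      rw [image_collapse_of_subset hA0 h, card_insert_of_notMem htB]
      have := hBA.card_pos
      omega
    · rw [image_collapse_of_disjoint h]
      exact hS.two_le_card B hBS
  · simp only [NestedSet.contractFamily, forall_mem_image]
    intro B hB C hC
    rcases hS.laminar B (mem_of_mem_erase hB) C (mem_of_mem_erase hC) with h | h | h
    · exact Or.inl (image_subset_image h)
    · exact Or.inr (Or.inl (image_subset_image h))
    · rw [← expand_image_collapse_of_mem_erase hV hS hA hB,
        ← expand_image_collapse_of_mem_erase hV hS hA hC] at h
      exact Or.inr (Or.inr ((disjoint_pullback_iff (hrange B (mem_of_mem_erase hB))).1 h))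

lemma card_contractFamily (hAV : A ≠ V) : (contractFamily A t S).card + 1 = S.card := by
  have hAS := (mem_mins.1 hA).1
  conv_rhs => rw [← expandFamily_contractFamily hV hS hA]
  rw [card_expandFamily hV (hS.subset_ground A hAS) (hS.two_le_card A hAS)
    (hS.contractFamily hV hA hAV)]

end Contract

section Partition

variable {α : Type*} [DecidableEq α]

structure IsPartOn (W : Finset α) (P : Finset (Finset α)) : Prop where
  two_le_card : ∀ B ∈ P, 2 ≤ B.card
  disjoint : ∀ B ∈ P, ∀ C ∈ P, B ≠ C → Disjoint B C
  biUnion_eq : P.biUnion id = W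

variable {W X B : Finset α} {P : Finset (Finset α)}

lemma IsPartOn.subset (hP : IsPartOn W P) (hB : B ∈ P) : B ⊆ W :=
  hP.biUnion_eq ▸ subset_biUnion_of_mem id hB

lemma IsPartOn.notMem_of_sdiff (hP : IsPartOn (W \ B) P) (hB : B.Nonempty) : B ∉ P := fun h => by
  obtain ⟨x, hx⟩ := hB
  exact (mem_sdiff.1 (hP.subset h hx)).2 hx

lemma IsPartOn.erase (hP : IsPartOn W P) (hB : B ∈ P) : IsPartOn (W \ B) (P.erase B) := by
  refine ⟨fun C hC => hP.two_le_card C (mem_of_mem_erase hC),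
    fun C hC D hD => hP.disjoint C (mem_of_mem_erase hC) D (mem_of_mem_erase hD), ?_⟩
  have hdisj : Disjoint B ((P.erase B).biUnion id) := (disjoint_biUnion_right _ _ _).2
    fun C hC => hP.disjoint B hB C (mem_of_mem_erase hC) (ne_of_mem_erase hC).symm
  rw [← hP.biUnion_eq]
  conv_rhs => rw [← insert_erase hB, biUnion_insert, id, union_sdiff_cancel_left hdisj]

lemma IsPartOn.insert (hP : IsPartOn (W \ B) P) (hBW : B ⊆ W) (hB : 2 ≤ B.card) :
    IsPartOn W (insert B P) := by
  have hdisj : ∀ C ∈ P, Disjoint B C := fun C hC =>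
    disjoint_of_subset_right (hP.subset hC) disjoint_sdiff
  refine ⟨forall_mem_insert _ _ _ |>.2 ⟨hB, hP.two_le_card⟩, ?_, ?_⟩
  · simp only [forall_mem_insert]
    refine ⟨⟨fun h => absurd rfl h, fun C hC _ => hdisj C hC⟩,
      fun C hC => ⟨fun _ => (hdisj C hC).symm, hP.disjoint C hC⟩⟩
  · rw [biUnion_insert, hP.biUnion_eq, id, union_sdiff_of_subset hBW]

/-- Blocks not contained in `X` meet `W \ X` in pairwise distinct points. -/
lemma IsPartOn.exists_subset_of_card_sdiff_lt (hP : IsPartOn W P) (h : (W \ X).card < P.card) :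
    ∃ B ∈ P, B ⊆ X := by
  by_contra! hout
  obtain ⟨B₀, hB₀⟩ : P.Nonempty := card_pos.1 (by omega)
  have : Nonempty α := ⟨(not_subset.1 (hout B₀ hB₀)).choose⟩
  choose! f hfB hfX using fun B hB => not_subset.1 (hout B hB)
  refine h.not_ge (card_le_card_of_injOn f (fun B hB => ?_) fun B hB C hC hBC => ?_)
  · exact mem_sdiff.2 ⟨hP.subset hB (hfB B hB), hfX B hB⟩
  · by_contra hne
    exact disjoint_left.1 (hP.disjoint B hB C hC hne) (hfB B hB) (hBC ▸ hfB C hC)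

end Partition

section Bijection

noncomputable def pick (T : Finset (Finset ℕ)) : Finset ℕ := Classical.epsilon (· ∈ T)

lemma pick_mem {T : Finset (Finset ℕ)} (h : T.Nonempty) : pick T ∈ T := Classical.epsilon_spec h

/-- `K + 1` is the number of members of the nested set, and `t, …, t + K - 1` are the points
added by the successive contractions. -/
noncomputable def toPartition : ℕ → ℕ → Finset (Finset ℕ) → Finset (Finset ℕ)
  | 0, _, S => S
  | K + 1, t, S =>
    let A := pick (mins S)
    insert A (toPartition K (t + 1) (contractFamily A t S))

noncomputable def toNested : ℕ → ℕ → Finset (Finset ℕ) → Finset (Finset ℕ)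
  | 0, _, P => P
  | K + 1, t, P =>
    let B := pick (P.filter (· ⊆ range t))
    expandFamily B t (toNested K (t + 1) (P.erase B))

variable {V A : Finset ℕ} {t K : ℕ} {S P : Finset (Finset ℕ)}

lemma filter_filter_subset_range_succ (P : Finset (Finset ℕ)) :
    (P.filter (· ⊆ range (t + 1))).filter (t ∉ ·) = P.filter (· ⊆ range t) := by
  ext C
  simp only [mem_filter, and_assoc, range_add_one]
  exact and_congr_right fun _ =>
    ⟨fun ⟨h, ht⟩ => (subset_insert_iff_of_notMem ht).1 h,
      fun h => ⟨h.trans (subset_insert _ _), fun ht => lt_irrefl t (mem_range.1 (h ht))⟩⟩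

lemma union_Ico_sdiff (hV : V ⊆ range t) (hAV : A ⊆ V) :
    (V ∪ Ico t (t + (K + 1))) \ A = insert t (V \ A) ∪ Ico (t + 1) (t + 1 + K) := by
  ext x
  have hA : x ∈ A → x < t := fun hx => mem_range.1 (hV (hAV hx))
  simp only [mem_sdiff, mem_union, mem_insert, mem_Ico]
  constructor
  · rintro ⟨hx | hx, hxA⟩
    · exact Or.inl (Or.inr ⟨hx, hxA⟩)
    · omega
  · rintro ((rfl | ⟨hx, hxA⟩) | hx)
    · exact ⟨Or.inr (by omega), fun h => by have := hA h; omega⟩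
    · exact ⟨Or.inl hx, hxA⟩
    · exact ⟨Or.inr (by omega), fun h => by have := hA h; omega⟩

lemma subset_of_subset_union_Ico {B : Finset ℕ} {s : ℕ} (hB : B ⊆ V ∪ Ico t s)
    (hBt : B ⊆ range t) : B ⊆ V := fun x hx => by
  rcases mem_union.1 (hB hx) with h | h
  · exact h
  · exact absurd (mem_range.1 (hBt hx)) (not_lt.2 (mem_Ico.1 h).1)

lemma card_union_Ico_sdiff_range (hV : V ⊆ range t) : ((V ∪ Ico t (t + K)) \ range t).card ≤ K := by
  refine (card_le_card fun x hx => ?_).trans (Nat.card_Ico t (t + K)).le |>.trans (by omega)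
  simp only [mem_sdiff, mem_union, mem_range, mem_Ico] at hx ⊢
  rcases hx with ⟨hx | hx, hxt⟩
  · exact absurd (mem_range.1 (hV hx)) hxt
  · exact hx

lemma insert_sdiff_subset_range_succ (hV : V ⊆ range t) : insert t (V \ A) ⊆ range (t + 1) := by
  rw [range_add_one]
  exact insert_subset_insert _ (sdiff_subset.trans hV)

lemma filter_subset_range_nonempty (hV : V ⊆ range t) (hP : IsPartOn (V ∪ Ico t (t + K)) P)
    (hcard : P.card = K + 1) : (P.filter (· ⊆ range t)).Nonempty := by
  obtain ⟨B, hBP, hBt⟩ := hP.exists_subset_of_card_sdiff_lt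
    ((card_union_Ico_sdiff_range hV).trans_lt (by omega))
  exact ⟨B, mem_filter.2 ⟨hBP, hBt⟩⟩

lemma isNestedOn_singleton (h : 2 ≤ V.card) : IsNestedOn V {V} :=
  ⟨mem_singleton_self V, by simp, by simpa using h, by simp⟩

lemma isPartOn_singleton (h : 2 ≤ V.card) : IsPartOn V {V} :=
  ⟨by simpa using h, by simp, by simp⟩

lemma mins_singleton : mins {V} = {V} :=
  filter_true_of_mem (by simp)

theorem toPartition_spec (hV : V ⊆ range t) (hS : IsNestedOn V S) (hcard : S.card = K + 1) :
    IsPartOn (V ∪ Ico t (t + K)) (toPartition K t S) ∧ (toPartition K t S).card = K + 1 ∧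
      (toPartition K t S).filter (· ⊆ range t) = mins S ∧
      toNested K t (toPartition K t S) = S := by
  induction K generalizing t V S with
  | zero =>
    obtain ⟨B, rfl⟩ := card_eq_one.1 hcard
    obtain rfl := mem_singleton.1 hS.ground_mem
    have h2 := hS.two_le_card V (mem_singleton_self V)
    simp [toPartition, toNested, isPartOn_singleton h2, mins_singleton, hV]
  | succ K ih =>
    have hA : pick (mins S) ∈ mins S := pick_mem (mins_nonempty (card_pos.1 (by omega)))
    set A := pick (mins S)
    have hAS := (mem_mins.1 hA).1
    have hAV : A ⊆ V := hS.subset_ground A hAS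
    have hA2 : 2 ≤ A.card := hS.two_le_card A hAS
    have hAne : A ≠ V := by
      rintro rfl
      simp [hS.eq_singleton_of_ground_mem_mins hA] at hcard
    have hS' := hS.contractFamily (t := t) hV hA hAne
    have hcard' := card_contractFamily (t := t) hV hS hA hAne
    obtain ⟨hP, hcardP, hlow, hinv⟩ := ih (insert_sdiff_subset_range_succ hV) hS' (by omega)
    set Q := toPartition K (t + 1) (contractFamily A t S)
    rw [← union_Ico_sdiff hV hAV] at hP
    have hAQ : A ∉ Q := hP.notMem_of_sdiff (card_pos.1 (by omega))
    -- so that `toNested` picks `A` back out of `insert A Q`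
    have hlow' : (insert A Q).filter (· ⊆ range t) = mins S := by
      rw [filter_insert, if_pos (hAV.trans hV), ← filter_filter_subset_range_succ, hlow,
        ← mins_expandFamily hV hAV hA2 hS', expandFamily_contractFamily hV hS hA]
    have hunfold : toPartition (K + 1) t S = insert A Q := rfl
    refine ⟨?_, ?_, ?_, ?_⟩
    · rw [hunfold]
      exact hP.insert (hAV.trans subset_union_left) hA2
    · rw [hunfold, card_insert_of_notMem hAQ, hcardP]
    · rw [hunfold, hlow']
    · rw [hunfold, toNested]
      simp only [hlow']
      rw [show pick (mins S) = A from rfl, erase_insert hAQ, hinv,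
        expandFamily_contractFamily hV hS hA]

theorem toNested_spec (hV : V ⊆ range t) (hP : IsPartOn (V ∪ Ico t (t + K)) P)
    (hcard : P.card = K + 1) :
    IsNestedOn V (toNested K t P) ∧ (toNested K t P).card = K + 1 ∧
      mins (toNested K t P) = P.filter (· ⊆ range t) ∧
      toPartition K t (toNested K t P) = P := by
  induction K generalizing t V P with
  | zero =>
    obtain ⟨B, rfl⟩ := card_eq_one.1 hcard
    have hBV : B = V := by simpa using hP.biUnion_eq
    subst hBV
    have h2 := hP.two_le_card B (mem_singleton_self B)
    simp [toPartition, toNested, isNestedOn_singleton h2, mins_singleton, filter_singleton, hV]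
  | succ K ih =>
    have hB : pick (P.filter (· ⊆ range t)) ∈ P.filter (· ⊆ range t) :=
      pick_mem (filter_subset_range_nonempty hV hP hcard)
    set B := pick (P.filter (· ⊆ range t))
    obtain ⟨hBP, hBt⟩ := mem_filter.1 hB
    have hBV : B ⊆ V := subset_of_subset_union_Ico (hP.subset hBP) hBt
    have hB2 : 2 ≤ B.card := hP.two_le_card B hBP
    have hP' := hP.erase hBP
    rw [union_Ico_sdiff hV hBV] at hP'
    obtain ⟨hS, hcardS, hmins, hinv⟩ :=
      ih (insert_sdiff_subset_range_succ hV) hP' (by rw [card_erase_of_mem hBP, hcard]; rfl)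
    set S := toNested K (t + 1) (P.erase B)
    have hmins' : mins (expandFamily B t S) = P.filter (· ⊆ range t) := by
      rw [mins_expandFamily hV hBV hB2 hS, hmins, filter_filter_subset_range_succ, filter_erase,
        insert_erase hB]
    have hunfold : toNested (K + 1) t P = expandFamily B t S := rfl
    refine ⟨?_, ?_, ?_, ?_⟩
    · rw [hunfold]
      exact hS.expandFamily hV hBV hB2
    · rw [hunfold, card_expandFamily hV hBV hB2 hS, hcardS]
    · rw [hunfold, hmins']
    · rw [hunfold, toPartition]
      simp only [hmins']
      rw [show pick (P.filter (· ⊆ range t)) = B from rfl,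
        contractFamily_expandFamily hV hBV hB2 hS, hinv, insert_erase hBP]

end Bijection

end NestedSet

open NestedSet Finset

lemma isNested2_iff {n k : ℕ} {S : Finset (Finset ℕ)} :
    IsNested2 n k S ↔ IsNestedOn (Icc 1 n) S ∧ S.card = k :=
  ⟨fun ⟨hk, hV, hsub, hlam⟩ =>
    ⟨⟨hV, fun B hB => (hsub B hB).1, fun B hB => (hsub B hB).2, hlam⟩, hk⟩,
    fun ⟨hS, hk⟩ => ⟨hk, hS.ground_mem, fun B hB => ⟨hS.subset_ground B hB, hS.two_le_card B hB⟩,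
      hS.laminar⟩⟩

lemma isPart2_iff {m k : ℕ} {P : Finset (Finset ℕ)} :
    IsPart2 m k P ↔ IsPartOn (Icc 1 m) P ∧ P.card = k :=
  ⟨fun ⟨hk, h2, hdisj, hW⟩ => ⟨⟨h2, hdisj, hW⟩, hk⟩, fun ⟨hP, hk⟩ => ⟨hk, hP.1, hP.2, hP.3⟩⟩

theorem stmt0_general (n k : ℕ) (hk1 : 1 ≤ k) :
    Nonempty ({S : Finset (Finset ℕ) // IsNested2 n k S} ≃
      {P : Finset (Finset ℕ) // IsPart2 (n + k - 1) k P}) := by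
  obtain ⟨K, rfl⟩ := Nat.exists_eq_add_of_le' hk1
  have hV : Icc 1 n ⊆ range (n + 1) := fun x hx => by simp at hx ⊢; omega
  have hW : Icc 1 n ∪ Ico (n + 1) (n + 1 + K) = Icc 1 (n + (K + 1) - 1) := by
    ext x; simp; omega
  refine ⟨Set.BijOn.equiv (toPartition K (n + 1)) (Set.InvOn.bijOn (f' := toNested K (n + 1))
    ⟨fun S hS => ?_, fun P hP => ?_⟩ (fun S hS => ?_) fun P hP => ?_)⟩
  · obtain ⟨hS, hcard⟩ := isNested2_iff.1 hS
    exact (toPartition_spec hV hS hcard).2.2.2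
  · obtain ⟨hP, hcard⟩ := isPart2_iff.1 hP
    exact (toNested_spec hV (hW ▸ hP) hcard).2.2.2
  · obtain ⟨hS, hcard⟩ := isNested2_iff.1 hS
    obtain ⟨hP, hcardP, -⟩ := toPartition_spec hV hS hcard
    exact isPart2_iff.2 ⟨hW ▸ hP, hcardP⟩
  · obtain ⟨hP, hcard⟩ := isPart2_iff.1 hP
    obtain ⟨hS, hcardS, -⟩ := toNested_spec hV (hW ▸ hP) hcard
    exact isNested2_iff.2 ⟨hS, hcardS⟩

theorem stmt0 (n k : ℕ) (hn : 2 ≤ n) (hk1 : 1 ≤ k) (hk : k ≤ n - 1) :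
    Nonempty ({S : Finset (Finset ℕ) // IsNested2 n k S} ≃
      {P : Finset (Finset ℕ) // IsPart2 (n + k - 1) k P}) :=
  stmt0_general n k hk1
end

section
/- For integers n ≥ 2 and 1 ≤ k ≤ n-1, the cardinality of S₂(n,k) equals the cardinality of T₂(n+k-1,k). -/
open Finset

lemma Finset.card_union_image_of_separated {ι κ β γ : Type*} [DecidableEq β] {Y : Finset ι}
    {Z : Finset κ} {f : ι → β} {g : κ → β} (r : β → γ) {a b : γ} (hab : a ≠ b)
    (hf : ∀ y ∈ Y, r (f y) = a) (hg : ∀ z ∈ Z, r (g z) = b)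
    (hfi : Set.InjOn f Y) (hgi : Set.InjOn g Z) :
    #(Y.image f ∪ Z.image g) = #Y + #Z := by
  rw [card_union_of_disjoint, card_image_of_injOn hfi, card_image_of_injOn hgi]
  refine disjoint_left.2 fun x hxf hxg => hab ?_
  obtain ⟨y, hy, rfl⟩ := mem_image.1 hxf
  obtain ⟨z, hz, hzy⟩ := mem_image.1 hxg
  rw [← hf y hy, ← hg z hz, hzy]

variable {α : Type*}

def IsLaminar (S : Finset (Finset α)) : Prop :=
  ∀ A ∈ S, ∀ B ∈ S, A ⊆ B ∨ B ⊆ A ∨ Disjoint A B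

lemma IsLaminar.mono {S T : Finset (Finset α)} (hS : IsLaminar S) (hT : T ⊆ S) : IsLaminar T :=
  fun A hA B hB => hS A (hT hA) B (hT hB)

variable [DecidableEq α]

instance : DecidablePred (IsLaminar (α := α)) := fun _ => by unfold IsLaminar; infer_instance

lemma IsLaminar.insert {A : Finset α} {S : Finset (Finset α)} (hS : IsLaminar S)
    (hA : ∀ C ∈ S, A ⊆ C ∨ C ⊆ A ∨ Disjoint A C) : IsLaminar (insert A S) := by
  intro X hX Y hY
  rcases mem_insert.1 hX with rfl | hX' <;> rcases mem_insert.1 hY with rfl | hY'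
  · exact .inl subset_rfl
  · exact hA Y hY'
  · rcases hA X hX' with h | h | h
    exacts [.inr (.inl h), .inl h, .inr (.inr h.symm)]
  · exact hS X hX' Y hY'

lemma IsLaminar.exists_minimal {S : Finset (Finset α)} {C : Finset α} {v : α} (hS : IsLaminar S)
    (hC : C ∈ S) (hv : v ∈ C) : ∃ M ∈ S, v ∈ M ∧ ∀ D ∈ S, v ∈ D → M ⊆ D := by
  obtain ⟨M, hM, hmin⟩ := exists_min_image {D ∈ S | v ∈ D} card ⟨C, mem_filter.2 ⟨hC, hv⟩⟩
  obtain ⟨hM, hvM⟩ := mem_filter.1 hM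
  refine ⟨M, hM, hvM, fun D hD hvD => ?_⟩
  rcases hS M hM D hD with h | h | h
  · exact h
  · exact (eq_of_subset_of_card_le h (hmin D (mem_filter.2 ⟨hD, hvD⟩))).ge
  · exact absurd hvD (disjoint_left.1 h hvM)

lemma IsLaminar.image_erase {S : Finset (Finset α)} (hS : IsLaminar S) (v : α) :
    IsLaminar (S.image (erase · v)) := by
  simp only [IsLaminar, mem_image, forall_exists_index, and_imp]
  rintro _ A hA rfl _ B hB rfl
  rcases hS A hA B hB with h | h | h
  · exact .inl (erase_subset_erase v h)
  · exact .inr (.inl (erase_subset_erase v h))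
  · exact .inr (.inr (h.mono (erase_subset v A) (erase_subset v B)))

section InsertIf

variable (p : Finset α → Prop) [DecidablePred p] (v : α)

def insertIf (C : Finset α) : Finset α := if p C then insert v C else C

variable {p v} {A C : Finset α} {S : Finset (Finset α)}

lemma subset_insertIf : C ⊆ insertIf p v C := by
  unfold insertIf; split_ifs
  exacts [subset_insert v C, subset_rfl]

lemma insertIf_subset_insert : insertIf p v C ⊆ insert v C := by
  unfold insertIf; split_ifs
  exacts [subset_rfl, subset_insert v C]

lemma erase_insertIf (hv : v ∉ C) : (insertIf p v C).erase v = C := by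
  unfold insertIf; split_ifs
  exacts [erase_insert hv, erase_eq_of_notMem hv]

lemma insertIf_erase (h : v ∈ C ↔ p (C.erase v)) : insertIf p v (C.erase v) = C := by
  unfold insertIf; split_ifs with hp
  exacts [insert_erase (h.2 hp), erase_eq_of_notMem (mt h.1 hp)]

lemma injOn_insertIf (hv : ∀ C ∈ S, v ∉ C) : Set.InjOn (insertIf p v) S := fun C hC D hD h => by
  rw [← erase_insertIf (p := p) (hv C hC), h, erase_insertIf (hv D hD)]

lemma injOn_erase (h : ∀ C ∈ S, v ∈ C ↔ p (C.erase v)) : Set.InjOn (erase · v) S :=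
  fun C hC D hD hCD => by
    rw [← insertIf_erase (h C hC), ← insertIf_erase (h D hD), show C.erase v = D.erase v from hCD]

lemma image_erase_image_insertIf (hv : ∀ C ∈ S, v ∉ C) :
    (S.image (insertIf p v)).image (erase · v) = S := by
  rw [image_image]
  exact (image_congr fun C hC => erase_insertIf (hv C hC)).trans image_id'

lemma image_insertIf_image_erase (h : ∀ C ∈ S, v ∈ C ↔ p (C.erase v)) :
    (S.image (erase · v)).image (insertIf p v) = S := by
  rw [image_image]
  exact (image_congr fun C hC => insertIf_erase (h C hC)).trans image_id'

lemma insert_mem_image_insertIf (hv : ∀ C ∈ S, v ∉ C) (hvA : v ∉ A) :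
    insert v A ∈ S.image (insertIf p v) ↔ A ∈ S ∧ p A := by
  refine ⟨fun h => ?_, fun ⟨hA, hpA⟩ => mem_image.2 ⟨A, hA, if_pos hpA⟩⟩
  obtain ⟨C, hC, hCA⟩ := mem_image.1 h
  unfold insertIf at hCA
  split_ifs at hCA with hpC
  · obtain rfl : C = A := by rw [← erase_insert (hv C hC), hCA, erase_insert hvA]
    exact ⟨hC, hpC⟩
  · exact absurd (hCA ▸ mem_insert_self v A) (hv C hC)

lemma biUnion_image_insertIf (hA : A ∈ S) (hpA : p A) :
    (S.image (insertIf p v)).biUnion id = insert v (S.biUnion id) := by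
  refine Subset.antisymm (biUnion_subset.2 ?_) (insert_subset_iff.2 ⟨?_, biUnion_subset.2 ?_⟩)
  · simp only [forall_mem_image, id]
    exact fun C hC =>
      insertIf_subset_insert.trans (insert_subset_insert v (subset_biUnion_of_mem id hC))
  · exact mem_biUnion.2 ⟨_, mem_image_of_mem _ hA, by simp [insertIf, hpA]⟩
  · exact fun C hC => subset_insertIf.trans (subset_biUnion_of_mem id (mem_image_of_mem _ hC))

lemma IsLaminar.image_insertIf (hS : IsLaminar S) (hv : ∀ C ∈ S, v ∉ C)
    (hmono : ∀ C ∈ S, ∀ D ∈ S, C ⊆ D → p C → p D)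
    (hdisj : ∀ C ∈ S, ∀ D ∈ S, p C → p D → ¬Disjoint C D) :
    IsLaminar (S.image (insertIf p v)) := by
  have hsub : ∀ C ∈ S, ∀ D ∈ S, C ⊆ D → insertIf p v C ⊆ insertIf p v D := by
    intro C hC D hD hCD
    by_cases hpC : p C
    · simp only [insertIf, hpC, hmono C hC D hD hCD hpC, if_true]
      exact insert_subset_insert v hCD
    · simp only [insertIf, hpC, if_false]
      exact hCD.trans subset_insertIf
  simp only [IsLaminar, mem_image, forall_exists_index, and_imp]
  rintro _ C hC rfl _ D hD rfl
  rcases hS C hC D hD with h | h | h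
  · exact .inl (hsub C hC D hD h)
  · exact .inr (.inl (hsub D hD C hC h))
  · refine .inr (.inr ?_)
    by_cases hpC : p C <;> by_cases hpD : p D
    · exact absurd h (hdisj C hC D hD hpC hpD)
    all_goals simp only [insertIf, hpC, hpD, if_true, if_false, disjoint_insert_left,
      disjoint_insert_right]
    exacts [⟨hv D hD, h⟩, ⟨hv C hC, h⟩, h]

end InsertIf

def nestedSets (s : Finset α) (k : ℕ) : Finset (Finset (Finset α)) :=
  {S ∈ s.powerset.powerset | #S = k ∧ s ∈ S ∧ (∀ A ∈ S, A ⊆ s ∧ 2 ≤ #A) ∧ IsLaminar S}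

open scoped Classical in
noncomputable def blockPartitions (s : Finset α) (k : ℕ) : Finset (Finset (Finset α)) :=
  {P ∈ s.powerset.powerset | #P = k ∧ (∀ A ∈ P, 2 ≤ #A) ∧
    (P : Set (Finset α)).PairwiseDisjoint id ∧ P.biUnion id = s}

/-- Deleting `v` from every member and discarding the members that become too small undoes both
`extendAt` and `extendNewAt`; the size of the result tells the two constructions apart. -/
def shrink (v : α) (S : Finset (Finset α)) : Finset (Finset α) :=
  {C ∈ S.image (erase · v) | 2 ≤ #C}

def extendAt (v : α) (A : Finset α) (S : Finset (Finset α)) : Finset (Finset α) :=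
  S.image (insertIf (A ⊆ ·) v)

def extendNewAt (v : α) (A : Finset α) (S : Finset (Finset α)) : Finset (Finset α) :=
  insert (insert v A) (S.image (insertIf (A ⊂ ·) v))

section Basic

variable {s : Finset α} {v : α} {k : ℕ} {S P : Finset (Finset α)}

lemma mem_nestedSets :
    S ∈ nestedSets s k ↔ #S = k ∧ s ∈ S ∧ (∀ A ∈ S, A ⊆ s ∧ 2 ≤ #A) ∧ IsLaminar S := by
  rw [nestedSets, mem_filter, mem_powerset, and_iff_right_iff_imp]
  exact fun ⟨_, _, h, _⟩ A hA => mem_powerset.2 (h A hA).1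

lemma mem_blockPartitions :
    P ∈ blockPartitions s k ↔ #P = k ∧ (∀ A ∈ P, 2 ≤ #A) ∧
      (P : Set (Finset α)).PairwiseDisjoint id ∧ P.biUnion id = s := by
  simp only [blockPartitions, mem_filter, mem_powerset, and_iff_right_iff_imp]
  exact fun ⟨_, _, _, h⟩ A hA => mem_powerset.2 (h ▸ subset_biUnion_of_mem id hA)

lemma notMem_of_mem_nestedSets (hv : v ∉ s) (hS : S ∈ nestedSets s k) : ∀ A ∈ S, v ∉ A :=
  fun A hA h => hv (((mem_nestedSets.1 hS).2.2.1 A hA).1 h)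

lemma notMem_of_mem_blockPartitions (hv : v ∉ s) (hP : P ∈ blockPartitions s k) :
    ∀ A ∈ P, v ∉ A :=
  fun _ hA h => hv ((mem_blockPartitions.1 hP).2.2.2 ▸ subset_biUnion_of_mem id hA h)

lemma nestedSets_zero : nestedSets s 0 = ∅ :=
  eq_empty_of_forall_notMem fun S hS => by
    obtain ⟨hcard, htop, -⟩ := mem_nestedSets.1 hS
    simp_all

lemma nestedSets_one (hs : 2 ≤ #s) : nestedSets s 1 = {{s}} := by
  ext S
  rw [mem_singleton, mem_nestedSets]
  constructor
  · rintro ⟨hcard, htop, -⟩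
    obtain ⟨A, rfl⟩ := card_eq_one.1 hcard
    rw [mem_singleton.1 htop]
  · rintro rfl
    simp [IsLaminar, hs]

lemma eq_singleton_of_mem_nestedSets (hs : #s ≤ 2) (hS : S ∈ nestedSets s k) : S = {s} := by
  obtain ⟨-, htop, hsub, -⟩ := mem_nestedSets.1 hS
  exact eq_singleton_iff_unique_mem.2 ⟨htop, fun A hA =>
    eq_of_subset_of_card_le (hsub A hA).1 (hs.trans (hsub A hA).2)⟩

lemma blockPartitions_zero (hs : s.Nonempty) : blockPartitions s 0 = ∅ :=
  eq_empty_of_forall_notMem fun P hP => by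
    obtain ⟨hcard, -, -, hunion⟩ := mem_blockPartitions.1 hP
    rw [card_eq_zero.1 hcard, biUnion_empty] at hunion
    exact hs.ne_empty hunion.symm

lemma blockPartitions_one (hs : 2 ≤ #s) : blockPartitions s 1 = {{s}} := by
  ext P
  rw [mem_singleton, mem_blockPartitions]
  constructor
  · rintro ⟨hcard, -, -, hunion⟩
    obtain ⟨A, rfl⟩ := card_eq_one.1 hcard
    rw [← hunion, singleton_biUnion, id]
  · rintro rfl
    simp [hs]

lemma blockPartitions_eq_empty (h : #s < 2 * k) : blockPartitions s k = ∅ :=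
  eq_empty_of_forall_notMem fun P hP => by
    obtain ⟨rfl, h2, hdisj, rfl⟩ := mem_blockPartitions.1 hP
    have : ∑ _A ∈ P, 2 ≤ ∑ A ∈ P, #(id A) := sum_le_sum h2
    rw [card_biUnion hdisj] at h
    simp only [sum_const, smul_eq_mul] at this
    omega

end Basic

section Extend

variable {A B C : Finset α} {v : α} {S : Finset (Finset α)}

lemma shrink_insert (h : C.erase v ∈ S.image (erase · v) ∨ #(C.erase v) < 2) :
    shrink v (insert C S) = shrink v S := by
  rw [shrink, shrink, image_insert]
  rcases h with h | h
  · rw [insert_eq_of_mem h]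
  · rw [filter_insert, if_neg (by omega)]

lemma shrink_eq_self (hv : ∀ C ∈ S, v ∉ C) (h2 : ∀ C ∈ S, 2 ≤ #C) : shrink v S = S := by
  rw [shrink, image_congr fun C hC => erase_eq_of_notMem (hv C hC), image_id']
  exact filter_true_of_mem h2

lemma shrink_image_insertIf {p : Finset α → Prop} [DecidablePred p] (hv : ∀ C ∈ S, v ∉ C)
    (h2 : ∀ C ∈ S, 2 ≤ #C) : shrink v (S.image (insertIf p v)) = S := by
  rw [shrink, image_erase_image_insertIf hv]
  exact filter_true_of_mem h2

lemma shrink_extendNewAt (hv : ∀ C ∈ S, v ∉ C) (h2 : ∀ C ∈ S, 2 ≤ #C) (hvA : v ∉ A)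
    (hA : A ∈ S ∨ #A < 2) : shrink v (extendNewAt v A S) = S := by
  rw [extendNewAt, shrink_insert, shrink_image_insertIf hv h2]
  rwa [erase_insert hvA, image_erase_image_insertIf hv]

lemma eq_of_extendAt_eq (hv : ∀ C ∈ S, v ∉ C) (hA : A ∈ S) (hB : B ∈ S)
    (h : extendAt v A S = extendAt v B S) : A = B := by
  have key : ∀ A ∈ S, ∀ B ∈ S, extendAt v A S = extendAt v B S → B ⊆ A := fun A hA B _ h =>
    ((insert_mem_image_insertIf hv (hv A hA)).1
      (h ▸ mem_image.2 ⟨A, hA, if_pos subset_rfl⟩ : insert v A ∈ extendAt v B S)).2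
  exact Subset.antisymm (key B hB A hA h.symm) (key A hA B hB h)

lemma eq_of_extendNewAt_eq (hv : ∀ C ∈ S, v ∉ C) (hvA : v ∉ A) (hvB : v ∉ B)
    (h : extendNewAt v A S = extendNewAt v B S) : A = B := by
  have key : ∀ A B, v ∉ A → v ∉ B → extendNewAt v A S = extendNewAt v B S → A = B ∨ B ⊂ A := by
    intro A B hvA hvB h
    rcases mem_insert.1 (h ▸ mem_insert_self _ _ : insert v A ∈ extendNewAt v B S) with h' | h'
    · exact .inl (by rw [← erase_insert hvA, h', erase_insert hvB])
    · exact .inr ((insert_mem_image_insertIf hv hvA).1 h').2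
  obtain rfl | hBA := key A B hvA hvB h
  · rfl
  obtain rfl | hAB := key B A hvB hvA h.symm
  exacts [rfl, absurd hAB (asymm hBA)]

lemma IsLaminar.extendAt (hS : IsLaminar S) (hv : ∀ C ∈ S, v ∉ C) (hA : A.Nonempty) :
    IsLaminar (extendAt v A S) :=
  let ⟨_, ha⟩ := hA
  hS.image_insertIf hv (fun _ _ _ _ hCD hAC => hAC.trans hCD)
    fun _ _ _ _ hAC hAD hCD => disjoint_left.1 hCD (hAC ha) (hAD ha)

lemma IsLaminar.extendNewAt (hS : IsLaminar S) (hv : ∀ C ∈ S, v ∉ C) (hA : A.Nonempty)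
    (hAS : ∀ C ∈ S, A ⊆ C ∨ C ⊆ A ∨ Disjoint A C) : IsLaminar (extendNewAt v A S) := by
  obtain ⟨a, ha⟩ := hA
  refine (hS.image_insertIf hv (fun _ _ _ _ hCD hAC => hAC.trans_subset hCD)
    fun _ _ _ _ hAC hAD hCD => disjoint_left.1 hCD (hAC.subset ha) (hAD.subset ha)).insert ?_
  simp only [forall_mem_image]
  intro C hC
  unfold insertIf
  split_ifs with hAC
  · exact .inl (insert_subset_insert v hAC.subset)
  rcases hAS C hC with h | h | h
  · exact .inr (.inl ((h.eq_of_not_ssubset hAC).symm.subset.trans (subset_insert v A)))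
  · exact .inr (.inl (h.trans (subset_insert v A)))
  · exact .inr (.inr (disjoint_insert_left.2 ⟨hv C hC, h⟩))

end Extend

section Partitions

variable {t A B : Finset α} {v : α} {k : ℕ} {P : Finset (Finset α)}

lemma biUnion_erase_of_mem (hdisj : (P : Set (Finset α)).PairwiseDisjoint id) (hB : B ∈ P) :
    (P.erase B).biUnion id = P.biUnion id \ B := by
  ext x
  simp only [mem_biUnion, mem_erase, mem_sdiff, id]
  constructor
  · rintro ⟨C, ⟨hCB, hC⟩, hx⟩
    exact ⟨⟨C, hC, hx⟩, fun hxB => hCB (hdisj.elim_finset hC hB x hx hxB)⟩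
  · rintro ⟨⟨C, hC, hx⟩, hxB⟩
    exact ⟨C, ⟨fun h => hxB (h ▸ hx), hC⟩, hx⟩

lemma extendAt_mem_blockPartitions (hv : v ∉ t) (hP : P ∈ blockPartitions t k) (hA : A ∈ P) :
    extendAt v A P ∈ blockPartitions (insert v t) k := by
  have hvP := notMem_of_mem_blockPartitions hv hP
  obtain ⟨rfl, h2, hdisj, hunion⟩ := mem_blockPartitions.1 hP
  obtain ⟨a, ha⟩ : A.Nonempty := card_pos.1 (by linarith [h2 A hA])
  have honly : ∀ C ∈ P, A ⊆ C → C = A := fun C hC hAC => hdisj.elim_finset hC hA a (hAC ha) ha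
  refine mem_blockPartitions.2 ⟨card_image_of_injOn (injOn_insertIf hvP), ?_, ?_, ?_⟩
  · simp only [extendAt, forall_mem_image]
    exact fun C hC => (h2 C hC).trans (card_le_card subset_insertIf)
  · simp only [extendAt, coe_image, Set.PairwiseDisjoint, Set.Pairwise, Set.mem_image, mem_coe,
      forall_exists_index, and_imp]
    rintro _ C hC rfl _ D hD rfl hCD
    have hCD' : C ≠ D := fun h => hCD (h ▸ rfl)
    have hdisjCD : Disjoint C D := hdisj hC hD hCD'
    simp only [Function.onFun, id, insertIf]
    split_ifs with hAC hAD
    · exact absurd ((honly C hC hAC).trans (honly D hD hAD).symm) hCD'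
    · exact disjoint_insert_left.2 ⟨hvP D hD, hdisjCD⟩
    · exact disjoint_insert_right.2 ⟨hvP C hC, hdisjCD⟩
    · exact hdisjCD
  · rw [extendAt, biUnion_image_insertIf hA subset_rfl, hunion]

lemma insert_pair_mem_blockPartitions {b : α} (hv : v ∉ t) (hb : b ∈ t)
    (hP : P ∈ blockPartitions (t.erase b) k) :
    insert {v, b} P ∈ blockPartitions (insert v t) (k + 1) := by
  obtain ⟨rfl, h2, hdisj, hunion⟩ := mem_blockPartitions.1 hP
  have hsub : ∀ C ∈ P, C ⊆ t.erase b := fun C hC => hunion ▸ subset_biUnion_of_mem id hC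
  have hvb : v ≠ b := fun h => hv (h ▸ hb)
  have hdisjvb : ∀ C ∈ P, Disjoint {v, b} C := fun C hC => by
    rw [disjoint_insert_left, disjoint_singleton_left]
    exact ⟨fun h => hv (mem_of_mem_erase (hsub C hC h)), fun h => notMem_erase b t (hsub C hC h)⟩
  have hnotin : {v, b} ∉ P := fun h => hv (mem_of_mem_erase (hsub _ h (mem_insert_self v {b})))
  refine mem_blockPartitions.2 ⟨card_insert_of_notMem hnotin, ?_, ?_, ?_⟩
  · exact (forall_mem_insert _ _ _).2 ⟨(card_pair hvb).ge, h2⟩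
  · rw [coe_insert]
    exact hdisj.insert fun C hC _ => hdisjvb C hC
  · rw [biUnion_insert, hunion, id, insert_union, singleton_union, insert_erase hb]

lemma image_erase_mem_blockPartitions (hv : v ∉ t) (hP : P ∈ blockPartitions (insert v t) k)
    (hB : B ∈ P) (hvB : v ∈ B) (h3 : 3 ≤ #B) :
    P.image (erase · v) ∈ blockPartitions t k ∧
      extendAt v (B.erase v) (P.image (erase · v)) = P := by
  obtain ⟨rfl, h2, hdisj, hunion⟩ := mem_blockPartitions.1 hP
  obtain ⟨a, ha⟩ : (B.erase v).Nonempty := card_pos.1 (by rw [card_erase_of_mem hvB]; omega)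
  have hiff : ∀ C ∈ P, v ∈ C ↔ B.erase v ⊆ C.erase v := fun C hC =>
    ⟨fun hvC => hdisj.elim_finset hC hB v hvC hvB ▸ subset_rfl, fun h =>
      hdisj.elim_finset hC hB a (mem_of_mem_erase (h ha)) (mem_of_mem_erase ha) ▸ hvB⟩
  refine ⟨mem_blockPartitions.2 ⟨card_image_of_injOn (injOn_erase hiff), ?_, ?_, ?_⟩,
    image_insertIf_image_erase hiff⟩
  · simp only [forall_mem_image]
    intro C hC
    by_cases hvC : v ∈ C
    · rw [hdisj.elim_finset hC hB v hvC hvB, card_erase_of_mem hvB]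
      omega
    · rw [erase_eq_of_notMem hvC]
      exact h2 C hC
  · simp only [coe_image, Set.PairwiseDisjoint, Set.Pairwise, Set.mem_image, mem_coe,
      forall_exists_index, and_imp]
    rintro _ C hC rfl _ D hD rfl hCD
    exact (hdisj hC hD fun h => hCD (h ▸ rfl)).mono (erase_subset v C) (erase_subset v D)
  · rw [image_biUnion, ← erase_insert hv, ← hunion, erase_biUnion]
    rfl

lemma erase_mem_blockPartitions (hv : v ∉ t) (hP : P ∈ blockPartitions (insert v t) (k + 1))
    (hB : B ∈ P) (hvB : v ∈ B) (h3 : #B < 3) :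
    ∃ b ∈ t, P.erase B ∈ blockPartitions (t.erase b) k ∧ insert {v, b} (P.erase B) = P := by
  obtain ⟨hcard, h2, hdisj, hunion⟩ := mem_blockPartitions.1 hP
  obtain ⟨b, hb⟩ := card_eq_one.1 (show #(B.erase v) = 1 by
    have := h2 B hB
    rw [card_erase_of_mem hvB]
    omega)
  have hBvb : B = {v, b} := by rw [← insert_erase hvB, hb]
  have hbt : b ∈ t := by
    have hbB : b ∈ B := mem_of_mem_erase (hb ▸ mem_singleton_self b)
    have hbv : b ≠ v := ne_of_mem_erase (hb ▸ mem_singleton_self b)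
    exact (mem_insert.1 (hunion ▸ subset_biUnion_of_mem id hB hbB)).resolve_left hbv
  refine ⟨b, hbt, mem_blockPartitions.2 ⟨?_, fun C hC => h2 C (mem_of_mem_erase hC),
    hdisj.subset (by simp), ?_⟩, by rw [← hBvb, insert_erase hB]⟩
  · rw [card_erase_of_mem hB, hcard, Nat.add_sub_cancel]
  · rw [biUnion_erase_of_mem hdisj hB, hunion, hBvb]
    ext x
    simp only [mem_sdiff, mem_insert, mem_singleton, mem_erase]
    constructor
    · rintro ⟨hx | hx, hxvb⟩ <;> tauto
    · rintro ⟨hxb, hx⟩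
      exact ⟨.inr hx, by rintro (rfl | rfl) <;> contradiction⟩

lemma blockPartitions_insert (hv : v ∉ t) (k : ℕ) :
    blockPartitions (insert v t) (k + 1) =
      ((blockPartitions t (k + 1)).sigma fun P => P).image (fun x => extendAt v x.2 x.1) ∪
        (t.sigma fun b => blockPartitions (t.erase b) k).image (fun x => insert {v, x.1} x.2) := by
  ext P
  simp only [mem_union, mem_image, Sigma.exists, mem_sigma]
  constructor
  · intro hP
    obtain ⟨B, hB, hvB⟩ := mem_biUnion.1
      ((mem_blockPartitions.1 hP).2.2.2 ▸ mem_insert_self v t : v ∈ P.biUnion id)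
    by_cases h3 : 3 ≤ #B
    · obtain ⟨hP', hPeq⟩ := image_erase_mem_blockPartitions hv hP hB hvB h3
      exact .inl ⟨_, _, ⟨hP', mem_image_of_mem _ hB⟩, hPeq⟩
    · obtain ⟨b, hb, hP', hPeq⟩ := erase_mem_blockPartitions hv hP hB hvB (not_le.1 h3)
      exact .inr ⟨b, _, ⟨hb, hP'⟩, hPeq⟩
  · rintro (⟨P', A, ⟨hP', hA⟩, rfl⟩ | ⟨b, P', ⟨hb, hP'⟩, rfl⟩)
    exacts [extendAt_mem_blockPartitions hv hP' hA, insert_pair_mem_blockPartitions hv hb hP']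

theorem card_blockPartitions_insert (hv : v ∉ t) (k : ℕ) :
    #(blockPartitions (insert v t) (k + 1)) =
      (k + 1) * #(blockPartitions t (k + 1)) + ∑ b ∈ t, #(blockPartitions (t.erase b) k) := by
  have hvb : ∀ {b}, b ∈ t → v ∉ ({b} : Finset α) := fun hb h => hv (mem_singleton.1 h ▸ hb)
  have hshrink₁ : ∀ x ∈ (blockPartitions t (k + 1)).sigma fun P => P,
      shrink v (extendAt v x.2 x.1) = x.1 :=
    fun x hx => shrink_image_insertIf (notMem_of_mem_blockPartitions hv (mem_sigma.1 hx).1)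
      (mem_blockPartitions.1 (mem_sigma.1 hx).1).2.1
  have hshrink₂ : ∀ x ∈ t.sigma fun b => blockPartitions (t.erase b) k,
      shrink v (insert {v, x.1} x.2) = x.2 := by
    rintro ⟨b, P⟩ hx
    obtain ⟨hb, hP⟩ := mem_sigma.1 hx
    rw [shrink_insert (.inr (by simp [erase_insert (hvb hb)])),
      shrink_eq_self (notMem_of_mem_blockPartitions (mt mem_of_mem_erase hv) hP)
        (mem_blockPartitions.1 hP).2.1]
  rw [blockPartitions_insert hv, card_union_image_of_separated (fun P => #(shrink v P))
    (a := k + 1) (b := k) (by omega), card_sigma, card_sigma,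
    sum_congr rfl fun P hP => (mem_blockPartitions.1 hP).1, sum_const, smul_eq_mul, mul_comm]
  · exact fun x hx => by rw [hshrink₁ x hx, (mem_blockPartitions.1 (mem_sigma.1 hx).1).1]
  · exact fun x hx => by rw [hshrink₂ x hx, (mem_blockPartitions.1 (mem_sigma.1 hx).2).1]
  · rintro ⟨P, A⟩ hx ⟨Q, B⟩ hy h
    obtain rfl : P = Q := by simpa [hshrink₁ _ hx, hshrink₁ _ hy] using congrArg (shrink v) h
    obtain ⟨hP, hA⟩ := mem_sigma.1 hx
    obtain rfl : A = B := eq_of_extendAt_eq (notMem_of_mem_blockPartitions hv hP) hA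
      (mem_sigma.1 hy).2 h
    rfl
  · rintro ⟨b, P⟩ hx ⟨c, Q⟩ hy h
    obtain rfl : P = Q := by simpa [hshrink₂ _ hx, hshrink₂ _ hy] using congrArg (shrink v) h
    obtain ⟨hb, hP⟩ := mem_sigma.1 hx
    replace h : insert {v, b} P = insert {v, c} P := h
    rcases mem_insert.1 (h ▸ mem_insert_self _ _ : ({v, b} : Finset α) ∈ insert {v, c} P)
      with hbc | hbP
    · have := congrArg (erase · v) hbc
      simp only [erase_insert (hvb hb), erase_insert (hvb (mem_sigma.1 hy).1),
        singleton_inj] at this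
      rw [this]
    · exact absurd (mem_insert_self v {b})
        (notMem_of_mem_blockPartitions (mt mem_of_mem_erase hv) hP _ hbP)

end Partitions

section Nested

variable {s A M : Finset α} {v : α} {k : ℕ} {S : Finset (Finset α)}

lemma extendAt_mem_nestedSets (hv : v ∉ s) (hS : S ∈ nestedSets s k) (hA : A ∈ S) :
    extendAt v A S ∈ nestedSets (insert v s) k := by
  have hvS := notMem_of_mem_nestedSets hv hS
  obtain ⟨rfl, htop, hsub, hlam⟩ := mem_nestedSets.1 hS
  obtain ⟨a, ha⟩ : A.Nonempty := card_pos.1 (by linarith [(hsub A hA).2])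
  refine mem_nestedSets.2 ⟨card_image_of_injOn (injOn_insertIf hvS),
    mem_image.2 ⟨s, htop, if_pos (hsub A hA).1⟩, ?_, ?_⟩
  · simp only [extendAt, forall_mem_image]
    exact fun C hC => ⟨insertIf_subset_insert.trans (insert_subset_insert v (hsub C hC).1),
      (hsub C hC).2.trans (card_le_card subset_insertIf)⟩
  · exact hlam.extendAt hvS ⟨a, ha⟩

lemma extendNewAt_mem_nestedSets (hv : v ∉ s) (hS : S ∈ nestedSets s k)
    (hA : A ∈ S ∪ s.image singleton) : extendNewAt v A S ∈ nestedSets (insert v s) (k + 1) := by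
  have hvS := notMem_of_mem_nestedSets hv hS
  obtain ⟨rfl, htop, hsub, hlam⟩ := mem_nestedSets.1 hS
  obtain ⟨hAs, ⟨a, ha⟩, hArel⟩ : A ⊆ s ∧ A.Nonempty ∧ ∀ C ∈ S, A ⊆ C ∨ C ⊆ A ∨ Disjoint A C := by
    rcases mem_union.1 hA with hA | hA
    · exact ⟨(hsub A hA).1, card_pos.1 (by linarith [(hsub A hA).2]), hlam A hA⟩
    · obtain ⟨b, hb, rfl⟩ := mem_image.1 hA
      refine ⟨singleton_subset_iff.2 hb, singleton_nonempty b, fun C _ => ?_⟩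
      by_cases hbC : b ∈ C
      exacts [.inl (singleton_subset_iff.2 hbC), .inr (.inr (disjoint_singleton_left.2 hbC))]
  have hvA : v ∉ A := fun h => hv (hAs h)
  have hnew : insert v A ∉ S.image (insertIf (A ⊂ ·) v) := fun h =>
    (ssubset_irrefl A) ((insert_mem_image_insertIf hvS hvA).1 h).2
  refine mem_nestedSets.2 ⟨?_, ?_, ?_, ?_⟩
  · rw [extendNewAt, card_insert_of_notMem hnew, card_image_of_injOn (injOn_insertIf hvS)]
  · rcases hAs.eq_or_ssubset with rfl | hAs'
    exacts [mem_insert_self _ _, mem_insert_of_mem (mem_image.2 ⟨s, htop, if_pos hAs'⟩)]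
  · refine (forall_mem_insert _ _ _).2 ⟨⟨insert_subset_insert v hAs, ?_⟩, ?_⟩
    · rw [card_insert_of_notMem hvA]
      exact Nat.succ_le_succ (card_pos.2 ⟨a, ha⟩)
    · simp only [forall_mem_image]
      exact fun C hC => ⟨insertIf_subset_insert.trans (insert_subset_insert v (hsub C hC).1),
        (hsub C hC).2.trans (card_le_card subset_insertIf)⟩
  · exact hlam.extendNewAt hvS ⟨a, ha⟩ hArel

lemma two_le_card_erase {C : Finset α} (h2 : 2 ≤ #C) (h3 : v ∈ C → 3 ≤ #C) :
    2 ≤ #(C.erase v) := by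
  by_cases hvC : v ∈ C
  · have := h3 hvC
    rw [card_erase_of_mem hvC]
    omega
  · rwa [erase_eq_of_notMem hvC]

lemma eq_erase_of_erase_subset (hlam : IsLaminar S) (hM : M ∈ S) (hvM : v ∈ M)
    (hne : (M.erase v).Nonempty) {C : Finset α} (hC : C ∈ S) (hvC : v ∉ C)
    (h : M.erase v ⊆ C) : C = M.erase v := by
  rcases hlam C hC M hM with hCM | hMC | hdisj
  · exact Subset.antisymm (subset_erase.2 ⟨hCM, hvC⟩) h
  · exact absurd (hMC hvM) hvC
  · obtain ⟨a, ha⟩ := hne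
    exact absurd (mem_of_mem_erase ha) (disjoint_left.1 hdisj (h ha))

lemma mem_iff_erase_ssubset_erase (hlam : IsLaminar S) (hM : M ∈ S) (hvM : v ∈ M)
    (hmin : ∀ D ∈ S, v ∈ D → M ⊆ D) (hne : (M.erase v).Nonempty) {C : Finset α}
    (hC : C ∈ S.erase M) : v ∈ C ↔ M.erase v ⊂ C.erase v := by
  obtain ⟨hCM, hC⟩ := mem_erase.1 hC
  refine ⟨fun hvC => Finset.ssubset_iff_subset_ne.2 ⟨erase_subset_erase v (hmin C hC hvC),
    fun heq => hCM ?_⟩, fun hMC => by_contra fun hvC => ?_⟩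
  · rw [← insert_erase hvM, heq, insert_erase hvC]
  · rw [erase_eq_of_notMem hvC] at hMC
    exact hMC.ne (eq_erase_of_erase_subset hlam hM hvM hne hC hvC hMC.subset).symm

lemma image_erase_mem_nestedSets (hv : v ∉ s) (hS : S ∈ nestedSets (insert v s) k) (hM : M ∈ S)
    (hvM : v ∈ M) (hmin : ∀ D ∈ S, v ∈ D → M ⊆ D) (h3 : 3 ≤ #M) (hMS : M.erase v ∉ S) :
    S.image (erase · v) ∈ nestedSets s k ∧ extendAt v (M.erase v) (S.image (erase · v)) = S := by
  obtain ⟨rfl, htop, hsub, hlam⟩ := mem_nestedSets.1 hS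
  have hne : (M.erase v).Nonempty := card_pos.1 (by rw [card_erase_of_mem hvM]; omega)
  have hiff : ∀ C ∈ S, v ∈ C ↔ M.erase v ⊆ C.erase v := fun C hC =>
    ⟨fun hvC => erase_subset_erase v (hmin C hC hvC), fun h => by_contra fun hvC => hMS <|
      eq_erase_of_erase_subset hlam hM hvM hne hC hvC (erase_eq_of_notMem hvC ▸ h) ▸ hC⟩
  refine ⟨mem_nestedSets.2 ⟨card_image_of_injOn (injOn_erase hiff),
    mem_image.2 ⟨_, htop, erase_insert hv⟩, ?_, hlam.image_erase v⟩,
    image_insertIf_image_erase hiff⟩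
  simp only [forall_mem_image]
  exact fun C hC => ⟨subset_insert_iff.1 (hsub C hC).1, two_le_card_erase (hsub C hC).2
    fun hvC => h3.trans (card_le_card (hmin C hC hvC))⟩

lemma mem_image_erase_erase_of_insert_mem (hv : v ∉ s) (hs : 2 ≤ #s) (htop : insert v s ∈ S)
    (h : #M < 3 ∨ M.erase v ∈ S) : s ∈ (S.erase M).image (erase · v) := by
  by_cases hMtop : M = insert v s
  · subst hMtop
    rw [erase_insert hv] at h
    refine mem_image.2 ⟨s, mem_erase.2 ⟨fun h' => hv (h' ▸ mem_insert_self v s),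
      h.resolve_left ?_⟩, erase_eq_of_notMem hv⟩
    rw [card_insert_of_notMem hv]
    omega
  · exact mem_image.2 ⟨_, mem_erase.2 ⟨Ne.symm hMtop, htop⟩, erase_insert hv⟩

lemma erase_image_erase_mem_nestedSets (hv : v ∉ s) (hs : 2 ≤ #s)
    (hS : S ∈ nestedSets (insert v s) (k + 1)) (hM : M ∈ S) (hvM : v ∈ M)
    (hmin : ∀ D ∈ S, v ∈ D → M ⊆ D) (h : #M < 3 ∨ M.erase v ∈ S) :
    (S.erase M).image (erase · v) ∈ nestedSets s k ∧
      M.erase v ∈ (S.erase M).image (erase · v) ∪ s.image singleton ∧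
      extendNewAt v (M.erase v) ((S.erase M).image (erase · v)) = S := by
  obtain ⟨hcard, htop, hsub, hlam⟩ := mem_nestedSets.1 hS
  have hM2 := (hsub M hM).2
  have hne : (M.erase v).Nonempty := card_pos.1 (by rw [card_erase_of_mem hvM]; omega)
  have hiff := fun C => mem_iff_erase_ssubset_erase (C := C) hlam hM hvM hmin hne
  refine ⟨mem_nestedSets.2 ⟨?_, ?_, ?_, (hlam.mono (erase_subset M S)).image_erase v⟩, ?_, ?_⟩
  · rw [card_image_of_injOn (injOn_erase hiff), card_erase_of_mem hM, hcard, Nat.add_sub_cancel]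
  · exact mem_image_erase_erase_of_insert_mem hv hs htop h
  · simp only [forall_mem_image]
    refine fun C hC => ⟨subset_insert_iff.1 (hsub C (mem_of_mem_erase hC)).1,
      two_le_card_erase (hsub C (mem_of_mem_erase hC)).2 fun hvC => ?_⟩
    have := card_lt_card (((hiff C hC).1 hvC))
    rw [card_erase_of_mem hvM, card_erase_of_mem hvC] at this
    omega
  · rcases h with h | h
    · obtain ⟨b, hb⟩ := card_eq_one.1 (show #(M.erase v) = 1 by rw [card_erase_of_mem hvM]; omega)
      have hbs : b ∈ s := by
        rw [← erase_insert hv]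
        exact erase_subset_erase v (hsub M hM).1 (hb ▸ mem_singleton_self b)
      exact mem_union_right _ (mem_image.2 ⟨b, hbs, hb.symm⟩)
    · exact mem_union_left _ (mem_image.2 ⟨M.erase v, mem_erase.2 ⟨erase_ne_self.2 hvM, h⟩,
        erase_eq_of_notMem (notMem_erase v M)⟩)
  · rw [extendNewAt, image_insertIf_image_erase hiff, insert_erase hvM, insert_erase hM]

lemma subset_of_mem_union_image_singleton (hS : S ∈ nestedSets s k)
    (hA : A ∈ S ∪ s.image singleton) : A ⊆ s := by
  rcases mem_union.1 hA with hA | hA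
  · exact ((mem_nestedSets.1 hS).2.2.1 A hA).1
  · obtain ⟨b, hb, rfl⟩ := mem_image.1 hA
    exact singleton_subset_iff.2 hb

lemma card_union_image_singleton (hS : S ∈ nestedSets s k) : #(S ∪ s.image singleton) = k + #s := by
  obtain ⟨rfl, -, hsub, -⟩ := mem_nestedSets.1 hS
  rw [card_union_of_disjoint, card_image_of_injective _ singleton_injective]
  refine disjoint_left.2 fun C hC hC' => ?_
  obtain ⟨b, -, rfl⟩ := mem_image.1 hC'
  simpa using (hsub _ hC).2

lemma nestedSets_insert (hv : v ∉ s) (hs : 2 ≤ #s) (k : ℕ) :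
    nestedSets (insert v s) (k + 1) =
      ((nestedSets s (k + 1)).sigma fun S => S).image (fun x => extendAt v x.2 x.1) ∪
        ((nestedSets s k).sigma fun S => S ∪ s.image singleton).image
          (fun x => extendNewAt v x.2 x.1) := by
  ext S
  simp only [mem_union, mem_image, Sigma.exists, mem_sigma]
  constructor
  · intro hS
    obtain ⟨-, htop, -, hlam⟩ := mem_nestedSets.1 hS
    obtain ⟨M, hM, hvM, hmin⟩ := hlam.exists_minimal htop (mem_insert_self v s)
    by_cases h : 3 ≤ #M ∧ M.erase v ∉ S
    · obtain ⟨hS', hSeq⟩ := image_erase_mem_nestedSets hv hS hM hvM hmin h.1 h.2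
      exact .inl ⟨_, _, ⟨hS', mem_image_of_mem _ hM⟩, hSeq⟩
    · obtain ⟨hS', hA, hSeq⟩ := erase_image_erase_mem_nestedSets hv hs hS hM hvM hmin
        ((not_and_or.1 h).imp not_le.1 not_not.1)
      exact .inr ⟨_, _, ⟨hS', by simpa using hA⟩, hSeq⟩
  · rintro (⟨S', A, ⟨hS', hA⟩, rfl⟩ | ⟨S', A, ⟨hS', hA⟩, rfl⟩)
    exacts [extendAt_mem_nestedSets hv hS' hA,
      extendNewAt_mem_nestedSets hv hS' (by simpa using hA)]

theorem card_nestedSets_insert (hv : v ∉ s) (hs : 2 ≤ #s) (k : ℕ) :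
    #(nestedSets (insert v s) (k + 1)) =
      (k + 1) * #(nestedSets s (k + 1)) + (k + #s) * #(nestedSets s k) := by
  have h2 : ∀ {k S}, S ∈ nestedSets s k → ∀ C ∈ S, 2 ≤ #C :=
    fun hS C hC => ((mem_nestedSets.1 hS).2.2.1 C hC).2
  have hvA : ∀ x ∈ (nestedSets s k).sigma fun S => S ∪ s.image singleton, v ∉ x.2 := by
    rintro ⟨S, A⟩ hx
    exact fun h => hv (subset_of_mem_union_image_singleton (mem_sigma.1 hx).1 (mem_sigma.1 hx).2 h)
  have hshrink₁ : ∀ x ∈ (nestedSets s (k + 1)).sigma fun S => S,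
      shrink v (extendAt v x.2 x.1) = x.1 := fun x hx =>
    shrink_image_insertIf (notMem_of_mem_nestedSets hv (mem_sigma.1 hx).1)
      (h2 (mem_sigma.1 hx).1)
  have hshrink₂ : ∀ x ∈ (nestedSets s k).sigma fun S => S ∪ s.image singleton,
      shrink v (extendNewAt v x.2 x.1) = x.1 := by
    rintro ⟨S, A⟩ hx
    obtain ⟨hS, hA⟩ := mem_sigma.1 hx
    refine shrink_extendNewAt (notMem_of_mem_nestedSets hv hS) (h2 hS) (hvA _ hx)
      ((mem_union.1 hA).imp_right fun hA => ?_)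
    obtain ⟨b, -, rfl⟩ := mem_image.1 hA
    simp
  rw [nestedSets_insert hv hs, card_union_image_of_separated (fun S => #(shrink v S))
    (a := k + 1) (b := k) (by omega), card_sigma, card_sigma,
    sum_congr rfl fun S hS => (mem_nestedSets.1 hS).1,
    sum_congr rfl fun S => card_union_image_singleton,
    sum_const, sum_const, smul_eq_mul, smul_eq_mul, mul_comm, mul_comm (#_)]
  · exact fun x hx => by rw [hshrink₁ x hx, (mem_nestedSets.1 (mem_sigma.1 hx).1).1]
  · exact fun x hx => by rw [hshrink₂ x hx, (mem_nestedSets.1 (mem_sigma.1 hx).1).1]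
  · rintro ⟨S, A⟩ hx ⟨S', B⟩ hy h
    obtain rfl : S = S' := by simpa [hshrink₁ _ hx, hshrink₁ _ hy] using congrArg (shrink v) h
    obtain ⟨hS, hA⟩ := mem_sigma.1 hx
    obtain rfl : A = B := eq_of_extendAt_eq (notMem_of_mem_nestedSets hv hS) hA
      (mem_sigma.1 hy).2 h
    rfl
  · rintro ⟨S, A⟩ hx ⟨S', B⟩ hy h
    obtain rfl : S = S' := by simpa [hshrink₂ _ hx, hshrink₂ _ hy] using congrArg (shrink v) h
    obtain rfl : A = B := eq_of_extendNewAt_eq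
      (notMem_of_mem_nestedSets hv (mem_sigma.1 hx).1) (hvA _ hx) (hvA _ hy) h
    rfl

end Nested

section Count

variable {β : Type*} [DecidableEq β] {s : Finset α} {t : Finset β} {k : ℕ}

lemma card_nestedSets_eq_card_blockPartitions_of_card_eq_two (hs : #s = 2)
    (ht : #t + 1 = #s + k) : #(nestedSets s k) = #(blockPartitions t k) := by
  obtain _ | _ | k := k
  · rw [nestedSets_zero, blockPartitions_zero (card_pos.1 (by omega)), card_empty, card_empty]
  · rw [nestedSets_one hs.ge, blockPartitions_one (by omega)]
    rfl
  · rw [blockPartitions_eq_empty (by omega),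
      eq_empty_of_forall_notMem (s := nestedSets s (k + 2)) fun S hS => ?_, card_empty, card_empty]
    have := (mem_nestedSets.1 hS).1
    rw [eq_singleton_of_mem_nestedSets hs.le hS, card_singleton] at this
    omega

theorem card_nestedSets_eq_card_blockPartitions (hs : 2 ≤ #s) (ht : #t + 1 = #s + k) :
    #(nestedSets s k) = #(blockPartitions t k) := by
  induction s using Finset.induction_on generalizing t k with
  | empty => simp at hs
  | insert v s hv ih =>
    obtain hs₁ | hs₂ := lt_or_ge #s 2
    · exact card_nestedSets_eq_card_blockPartitions_of_card_eq_two
        (by rw [card_insert_of_notMem hv] at hs ⊢; omega) ht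
    rw [card_insert_of_notMem hv] at ht
    obtain _ | k := k
    · rw [nestedSets_zero, blockPartitions_zero (card_pos.1 (by omega)), card_empty, card_empty]
    obtain ⟨w, hw⟩ : t.Nonempty := card_pos.1 (by omega)
    have hcard : #(t.erase w) = #s + k := by rw [card_erase_of_mem hw]; omega
    rw [card_nestedSets_insert hv hs₂, ← insert_erase hw,
      card_blockPartitions_insert (notMem_erase w t), ih (t := t.erase w) hs₂ (by omega),
      sum_congr rfl fun b hb => (ih hs₂ (t := (t.erase w).erase b) (k := k)
        (by rw [card_erase_of_mem hb]; omega)).symm,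
      sum_const, hcard, smul_eq_mul, add_comm #s]

end Count

lemma isNested2_iff_mem_nestedSets {n k : ℕ} {S : Finset (Finset ℕ)} :
    IsNested2 n k S ↔ S ∈ nestedSets (Icc 1 n) k :=
  mem_nestedSets.symm

lemma isPart2_iff_mem_blockPartitions {m k : ℕ} {P : Finset (Finset ℕ)} :
    IsPart2 m k P ↔ P ∈ blockPartitions (Icc 1 m) k :=
  mem_blockPartitions.symm

theorem stmt1_general (n k : ℕ) (hn : 2 ≤ n) :
    Nat.card {S : Finset (Finset ℕ) // IsNested2 n k S} =
      Nat.card {P : Finset (Finset ℕ) // IsPart2 (n + k - 1) k P} := by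
  rw [Nat.card_congr (Equiv.subtypeEquivRight fun _ => isNested2_iff_mem_nestedSets),
    Nat.card_congr (Equiv.subtypeEquivRight fun _ => isPart2_iff_mem_blockPartitions),
    Nat.card_eq_finsetCard, Nat.card_eq_finsetCard]
  exact card_nestedSets_eq_card_blockPartitions (by rw [Nat.card_Icc]; omega)
    (by rw [Nat.card_Icc, Nat.card_Icc]; omega)

theorem stmt1 (n k : ℕ) (hn : 2 ≤ n) (hk1 : 1 ≤ k) (hk : k ≤ n - 1) :
    Nat.card {S : Finset (Finset ℕ) // IsNested2 n k S} =
      Nat.card {P : Finset (Finset ℕ) // IsPart2 (n + k - 1) k P} :=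
  stmt1_general n k hn
end

section
/- For integers n ≥ 2 and 1 ≤ k ≤ n-1, the number of distinguished internally ordered k-partitions of {1,...,n+k-1} equals n! · C(n-2, k-1) · C(n+k-1, k-1). -/
/-- An admissible internally ordered `k`-partition of `{1,...,m}`: a family of `k`
pairwise disjoint duplicate-free lists (each list records the linear order of a
block), each of length ≥ 2, whose entries exhaust `{1,...,m}`. -/
def IsIOPart (m k : ℕ) (P : Finset (List ℕ)) : Prop :=
  P.card = k ∧ (∀ l ∈ P, l.Nodup ∧ 2 ≤ l.length) ∧
  (∀ l ∈ P, ∀ l' ∈ P, l ≠ l' → ∀ x ∈ l, x ∉ l') ∧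
  (∀ x, x ∈ Finset.Icc 1 m ↔ ∃ l ∈ P, x ∈ l)

/-!
Listing the marked part first and the other `k - 1` parts after it, in any order, turns a
distinguished partition into a sequence of `k` ordered blocks, and every distinguished partition
arises from exactly `(k - 1)!` sequences. A sequence of blocks is determined by its concatenation,
an ordering of `{1, …, m}` with `m = n + k - 1`, together with the list of block sizes, a
composition of `m` into `k` parts `≥ 2`; by stars and bars there are `C(m - k - 1, k - 1)` such
compositions. Hence the count is
`m! · C(n - 2, k - 1) / (k - 1)! = n! · C(n - 2, k - 1) · C(m, k - 1)`.
-/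

open List Finset Nat

section Orderings

variable {α : Type*} [DecidableEq α]

theorem List.nodup_and_toFinset_eq_iff_perm {l : List α} {S : Finset α} :
    l.Nodup ∧ l.toFinset = S ↔ l ~ S.toList := by
  rw [← Multiset.coe_eq_coe, Finset.coe_toList]
  constructor
  · rintro ⟨hl, rfl⟩
    rw [List.toFinset_val, hl.dedup]
  · intro h
    have hl : l.Nodup := by simpa [← h] using S.nodup
    refine ⟨hl, Finset.val_inj.1 ?_⟩
    rw [List.toFinset_val, hl.dedup, h]

theorem Finset.natCard_nodup_toFinset_eq (S : Finset α) :
    Nat.card {l : List α // l.Nodup ∧ l.toFinset = S} = (#S)! := by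
  simp_rw [List.nodup_and_toFinset_eq_iff_perm, ← List.mem_permutations, ← List.mem_toFinset]
  rw [Nat.card_eq_finsetCard, List.toFinset_card_of_nodup (nodup_permutations _ S.nodup_toList),
    length_permutations, length_toList]

theorem natCard_nodup_toFinset_eq_natCard_marked_mul (Φ : Finset α → Prop) {k : ℕ}
    (hΦ : ∀ S, Φ S → #S = k + 1) :
    Nat.card {l : List α // l.Nodup ∧ Φ l.toFinset} =
      Nat.card {p : Finset α × α // Φ p.1 ∧ p.2 ∈ p.1} * k ! := by
  set M := {p : Finset α × α // Φ p.1 ∧ p.2 ∈ p.1}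
  have hfiber (p : M) :
      Nat.card {t : List α // t.Nodup ∧ t.toFinset = p.1.1.erase p.1.2} = k ! := by
    rw [natCard_nodup_toFinset_eq, card_erase_of_mem p.2.2, hΦ _ p.2.1, Nat.add_sub_cancel]
  have (p : M) : Finite {t : List α // t.Nodup ∧ t.toFinset = p.1.1.erase p.1.2} :=
    Nat.finite_of_card_ne_zero (by rw [hfiber]; positivity)
  let e :
      (Σ p : M, {t : List α // t.Nodup ∧ t.toFinset = p.1.1.erase p.1.2}) ≃ M × Fin k ! :=
    (Equiv.sigmaCongrRight fun p => Finite.equivFinOfCardEq (hfiber p)).trans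
      (Equiv.sigmaEquivProd _ _)
  rw [← Nat.card_fin k !, ← Nat.card_prod, ← Nat.card_congr e]
  symm
  refine Nat.card_eq_of_bijective (fun x => ⟨x.1.1.2 :: x.2.1, ?_⟩) ⟨?_, ?_⟩
  · obtain ⟨⟨⟨S, a⟩, hS, ha⟩, t, ht, hts⟩ := x
    dsimp only at hS ha hts ⊢
    have hat : a ∉ t := fun h => by simpa [hts] using List.mem_toFinset.2 h
    refine ⟨nodup_cons.2 ⟨hat, ht⟩, ?_⟩
    rwa [toFinset_cons, hts, insert_erase ha]
  · rintro ⟨⟨⟨S, a⟩, _, ha⟩, t, _, hts⟩ ⟨⟨⟨S', a'⟩, _, ha'⟩, t', _, hts'⟩ h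
    obtain ⟨rfl, rfl⟩ := List.cons_eq_cons.1 (Subtype.ext_iff.1 h)
    dsimp only at ha ha' hts hts'
    obtain rfl : S = S' := by rw [← insert_erase ha, ← insert_erase ha', ← hts, ← hts']
    rfl
  · rintro ⟨_ | ⟨a, t⟩, hl, hΦl⟩
    · simpa using hΦ _ hΦl
    obtain ⟨hat, ht⟩ := nodup_cons.1 hl
    refine ⟨⟨⟨⟨(a :: t).toFinset, a⟩, hΦl, by simp⟩, t, ht, ?_⟩, rfl⟩
    dsimp only
    rw [toFinset_cons, erase_insert (by simpa using hat)]

end Orderings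

section Flatten

variable {α : Type*}

theorem List.splitLengths_map_length_flatten (L : List (List α)) :
    (L.map length).splitLengths L.flatten = L := by
  induction L with
  | nil => rfl
  | cons l L ih => simp [splitLengths_cons, ih]

theorem List.natCard_flatten_and_map_length (p : List α → Prop) (q : List ℕ → Prop) {m : ℕ}
    (hp : ∀ J, p J → J.length = m) (hq : ∀ c, q c → c.sum = m) :
    Nat.card {L : List (List α) // p L.flatten ∧ q (L.map length)} =
      Nat.card {J // p J} * Nat.card {c // q c} := by
  have hsum (J : {J // p J}) (c : {c // q c}) : c.1.sum = J.1.length := by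
    rw [hq c c.2, hp J J.2]
  rw [← Nat.card_prod]
  refine Nat.card_congr
    { toFun := fun L => (⟨L.1.flatten, L.2.1⟩, ⟨L.1.map length, L.2.2⟩)
      invFun := fun x => ⟨x.2.1.splitLengths x.1.1, ?_⟩
      left_inv := fun L => Subtype.ext (splitLengths_map_length_flatten L.1)
      right_inv := fun x => ?_ }
  · rw [flatten_splitLengths _ _ (hsum _ _).ge, map_splitLengths_length _ _ (hsum _ _).le]
    exact ⟨x.1.2, x.2.2⟩
  · ext : 2
    · exact flatten_splitLengths _ _ (hsum _ _).ge
    · exact map_splitLengths_length _ _ (hsum _ _).le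

theorem List.Nodup.of_flatten {L : List (List α)} (h : L.flatten.Nodup)
    (hne : ∀ l ∈ L, l ≠ []) : L.Nodup :=
  (nodup_flatten.1 h).2.imp_of_mem fun {a _} ha _ hab hEq => by
    subst hEq
    obtain ⟨x, hx⟩ := exists_mem_of_ne_nil a (hne a ha)
    exact hab hx hx

end Flatten

theorem List.natCard_length_eq_sum_eq (k s : ℕ) :
    Nat.card {d : List ℕ // d.length = k ∧ d.sum = s} = (k + s - 1).choose s := by
  have e : {d : List ℕ // d.length = k ∧ d.sum = s} ≃ Sym (Fin k) s :=
    (Equiv.subtypeSubtypeEquivSubtypeInter (fun d : List ℕ => d.length = k)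
      (fun d => d.sum = s)).symm.trans <|
    (Equiv.subtypeEquiv (Equiv.vectorEquivFin ℕ k) fun ⟨d, hd⟩ => by
      subst hd
      simp [Equiv.vectorEquivFin, List.Vector.get, Fin.sum_univ_getElem]).trans
    (Sym.equivNatSumOfFintype (Fin k) s).symm
  rw [Nat.card_congr e, Nat.card_eq_fintype_card, Sym.card_sym_eq_choose, Fintype.card_fin]

theorem List.sum_map_add_const (d : List ℕ) (b : ℕ) :
    (d.map (· + b)).sum = d.sum + d.length * b := by
  simp [List.sum_map_add]

theorem List.natCard_length_eq_forall_le_sum_eq (k b s : ℕ) :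
    Nat.card {c : List ℕ // c.length = k ∧ (∀ a ∈ c, b ≤ a) ∧ c.sum = s + k * b} =
      Nat.card {d : List ℕ // d.length = k ∧ d.sum = s} := by
  have hsub (c : List ℕ) (hc : ∀ a ∈ c, b ≤ a) : (c.map (· - b)).map (· + b) = c := by
    rw [map_map]
    exact map_congr_left (fun a ha => Nat.sub_add_cancel (hc a ha)) |>.trans (map_id c)
  refine Nat.card_congr
    { toFun := fun c => ⟨c.1.map (· - b), by simp [c.2.1], ?_⟩
      invFun := fun d => ⟨d.1.map (· + b), by simp [d.2.1], by simp, ?_⟩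
      left_inv := fun c => Subtype.ext (hsub c.1 c.2.2.1)
      right_inv := fun d => Subtype.ext ?_ }
  · have := congrArg List.sum (hsub c.1 c.2.2.1)
    rw [sum_map_add_const, c.2.2.2, length_map, c.2.1] at this
    omega
  · rw [sum_map_add_const, d.2.1, d.2.2]
  · simp [map_map, Function.comp_def]

theorem List.natCard_length_eq_forall_two_le_sum_eq {k m : ℕ} (hk : 1 ≤ k) (hm : 2 * k ≤ m) :
    Nat.card {c : List ℕ // c.length = k ∧ (∀ a ∈ c, 2 ≤ a) ∧ c.sum = m} =
      (m - k - 1).choose (k - 1) := by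
  obtain ⟨s, rfl⟩ : ∃ s, m = s + k * 2 := ⟨m - 2 * k, by omega⟩
  rw [natCard_length_eq_forall_le_sum_eq, natCard_length_eq_sum_eq,
    show s + k * 2 - k - 1 = k + s - 1 by omega]
  exact Nat.choose_symm_of_eq_add (by omega)

theorem nodup_and_isIOPart_toFinset_iff {m k : ℕ} {L : List (List ℕ)} :
    L.Nodup ∧ IsIOPart m k L.toFinset ↔
      (L.flatten.Nodup ∧ L.flatten.toFinset = Icc 1 m) ∧
        ((L.map length).length = k ∧ (∀ a ∈ L.map length, 2 ≤ a) ∧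
          (L.map length).sum = m) := by
  have hcover :
      (∀ x, x ∈ Icc 1 m ↔ ∃ l ∈ L, x ∈ l) ↔ L.flatten.toFinset = Icc 1 m := by
    simp [Finset.ext_iff, Iff.comm]
  have hsum (hnd : L.flatten.Nodup) (hcov : L.flatten.toFinset = Icc 1 m) :
      (L.map length).sum = m := by
    rw [← length_flatten, ← toFinset_card_of_nodup hnd, hcov, Nat.card_Icc, Nat.add_sub_cancel]
  have hdisj (hL : L.Nodup) :
      (∀ l ∈ L, ∀ l' ∈ L, l ≠ l' → ∀ x ∈ l, x ∉ l') ↔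
        L.Pairwise List.Disjoint := by
    have : Std.Symm (List.Disjoint (α := ℕ)) := ⟨fun _ _ h => h.symm⟩
    rw [← hL.pairwise_coe]
    simp [Set.Pairwise, List.Disjoint]
  simp only [IsIOPart, List.mem_toFinset, hcover, length_map, List.forall_mem_map]
  constructor
  · rintro ⟨hL, hcard, hblocks, hdisj', hcov⟩
    have hnd : L.flatten.Nodup :=
      nodup_flatten.2 ⟨fun l hl => (hblocks l hl).1, (hdisj hL).1 hdisj'⟩
    exact ⟨⟨hnd, hcov⟩, by rwa [← toFinset_card_of_nodup hL], fun l hl => (hblocks l hl).2,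
      hsum hnd hcov⟩
  · rintro ⟨⟨hnd, hcov⟩, hlen, h2, -⟩
    have hL : L.Nodup := hnd.of_flatten fun l hl hnil => by simpa [hnil] using h2 l hl
    exact ⟨hL, by rwa [toFinset_card_of_nodup hL],
      fun l hl => ⟨(nodup_flatten.1 hnd).1 l hl, h2 l hl⟩, (hdisj hL).2 (nodup_flatten.1 hnd).2,
      hcov⟩

theorem natCard_marked_isIOPart_mul_factorial {m k : ℕ} (hk : 1 ≤ k) (hm : 2 * k ≤ m) :
    Nat.card {p : Finset (List ℕ) × List ℕ // IsIOPart m k p.1 ∧ p.2 ∈ p.1} * (k - 1)! =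
      m ! * (m - k - 1).choose (k - 1) := by
  calc _ = Nat.card {L : List (List ℕ) // L.Nodup ∧ IsIOPart m k L.toFinset} :=
        (natCard_nodup_toFinset_eq_natCard_marked_mul _ fun _ hP => by rw [hP.1]; omega).symm
    _ = Nat.card {L : List (List ℕ) // (L.flatten.Nodup ∧ L.flatten.toFinset = Icc 1 m) ∧
          ((L.map length).length = k ∧ (∀ a ∈ L.map length, 2 ≤ a) ∧
            (L.map length).sum = m)} :=
        Nat.card_congr (Equiv.subtypeEquivRight fun _ => nodup_and_isIOPart_toFinset_iff)
    _ = Nat.card {J : List ℕ // J.Nodup ∧ J.toFinset = Icc 1 m} *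
          Nat.card {c : List ℕ // c.length = k ∧ (∀ a ∈ c, 2 ≤ a) ∧ c.sum = m} :=
        List.natCard_flatten_and_map_length _ _
          (fun J (hJ : J.Nodup ∧ J.toFinset = Icc 1 m) => by
            rw [← toFinset_card_of_nodup hJ.1, hJ.2, Nat.card_Icc, Nat.add_sub_cancel])
          (fun c (hc : c.length = k ∧ (∀ a ∈ c, 2 ≤ a) ∧ c.sum = m) => hc.2.2)
    _ = m ! * (m - k - 1).choose (k - 1) := by
        rw [natCard_nodup_toFinset_eq, natCard_length_eq_forall_two_le_sum_eq hk hm, Nat.card_Icc,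
          Nat.add_sub_cancel]

theorem stmt2_general (n k : ℕ) (hk1 : 1 ≤ k) (hk : k ≤ n - 1) :
    Nat.card {p : Finset (List ℕ) × List ℕ //
        IsIOPart (n + k - 1) k p.1 ∧ p.2 ∈ p.1} =
      n.factorial * (n - 2).choose (k - 1) * (n + k - 1).choose (k - 1) := by
  have hcount := natCard_marked_isIOPart_mul_factorial hk1 (by omega : 2 * k ≤ n + k - 1)
  have hfact := Nat.choose_mul_factorial_mul_factorial (n := n + k - 1) (k := k - 1) (by omega)
  rw [show n + k - 1 - (k - 1) = n by omega] at hfact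
  rw [show n + k - 1 - k - 1 = n - 2 by omega, ← hfact] at hcount
  refine Nat.eq_of_mul_eq_mul_right (Nat.factorial_pos (k - 1)) (hcount.trans ?_)
  ring

/-- A distinguished internally ordered `k`-partition is an admissible internally
ordered `k`-partition together with a marked part; its count is
`n! · C(n-2,k-1) · C(n+k-1,k-1)`. -/
theorem stmt2 (n k : ℕ) (hn : 2 ≤ n) (hk1 : 1 ≤ k) (hk : k ≤ n - 1) :
    Nat.card {p : Finset (List ℕ) × List ℕ //
        IsIOPart (n + k - 1) k p.1 ∧ p.2 ∈ p.1} =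
      n.factorial * (n - 2).choose (k - 1) * (n + k - 1).choose (k - 1) :=
  stmt2_general n k hk1 hk
end

section
/- For integers n ≥ 2 and 1 ≤ k ≤ n-1, the number of admissible internally ordered k-partitions of {1,...,n+k-1} equals (1/k) · n! · C(n-2, k-1) · C(n+k-1, k-1). -/
/-!
Listing the blocks of an internally ordered `k`-partition of `{1,...,m}` in one of the `k!`
possible orders and concatenating them gives a permutation of `{1,...,m}` together with the
composition of `m` into `k` parts `≥ 2` formed by the block sizes, and this is a bijection.
Subtracting `2` from each part, stars and bars counts these compositions as
`C(m-k-1, k-1)`, so `k! · #partitions = m! · C(m-k-1, k-1)`; for `m = n+k-1` the binomial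
is `C(n-2, k-1)`.
-/

open Nat

theorem Nat.card_eq_mul_of_card_fiber_eq {α β : Type*} (f : α → β) {c : ℕ} (hc : c ≠ 0)
    (h : ∀ b, Nat.card {a // f a = b} = c) : Nat.card α = Nat.card β * c := by
  have e (b : β) : {a // f a = b} ≃ Fin c :=
    have : Finite {a // f a = b} := Nat.finite_of_card_ne_zero (h b ▸ hc)
    (Finite.equivFin _).trans (finCongr (h b))
  rw [Nat.card_congr ((Equiv.sigmaFiberEquiv f).symm.trans
    ((Equiv.sigmaCongrRight e).trans (Equiv.sigmaEquivProd _ _))), Nat.card_prod, Nat.card_fin]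

theorem List.nodup_of_nodup_flatten {α : Type*} {L : List (List α)} (h : L.flatten.Nodup)
    (hne : ∀ b ∈ L, b ≠ []) : L.Nodup := by
  refine (List.nodup_flatten.1 h).2.imp_of_mem fun ha _ hdisj hab => ?_
  subst hab
  obtain ⟨x, hx⟩ := List.exists_mem_of_ne_nil _ (hne _ ha)
  exact hdisj hx hx

instance {α : Type*} : Std.Symm (List.Disjoint (α := α)) :=
  ⟨fun _ _ h => h.symm⟩

abbrev BlockSizes (m k : ℕ) : Type :=
  {b : List ℕ // b.length = k ∧ (∀ x ∈ b, 2 ≤ x) ∧ b.sum = m}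

def blockSizesOfExcess (k t : ℕ) :
    {c : Fin k → ℕ // ∑ i, c i = t} → BlockSizes (2 * k + t) k :=
  fun c => ⟨List.ofFn (c.1 · + 2), by simp, by simp [List.mem_ofFn], by
    simp [List.sum_ofFn, Finset.sum_add_distrib, c.2]; ring⟩

theorem blockSizesOfExcess_bijective (k t : ℕ) :
    Function.Bijective (blockSizesOfExcess k t) := by
  refine ⟨fun c c' h => ?_, fun ⟨b, hlen, hge, hsum⟩ => ?_⟩
  · have := List.ofFn_injective (congrArg Subtype.val h)
    exact Subtype.ext (funext fun i => by simpa using congrFun this i)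
  · subst hlen
    have hb : List.ofFn (fun i : Fin b.length => b[i] - 2 + 2) = b := by
      conv_rhs => rw [← List.ofFn_getElem (xs := b)]
      exact List.ofFn_inj.2 (funext fun i => Nat.sub_add_cancel (hge _ (List.getElem_mem _)))
    refine ⟨⟨fun i => b[i] - 2, ?_⟩, Subtype.ext hb⟩
    have hsum' := congrArg List.sum hb
    simp only [List.sum_ofFn, Finset.sum_add_distrib, Finset.sum_const, Finset.card_univ,
      Fintype.card_fin, smul_eq_mul] at hsum'
    dsimp only
    omega

theorem card_blockSizes (k t : ℕ) :
    Nat.card (BlockSizes (2 * k + t) k) = (k + t - 1).choose t := by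
  rw [← Nat.card_congr (Equiv.ofBijective _ (blockSizesOfExcess_bijective k t)),
    ← Nat.card_congr (Sym.equivNatSumOfFintype (Fin k) t), Sym.natCard_sym_eq_choose,
    Nat.card_fin]

section OrderedBlockPartition

variable {α : Type*}

def IsEnumeration (s : Finset α) (l : List α) : Prop :=
  l.Nodup ∧ ∀ x, x ∈ l ↔ x ∈ s

theorem isEnumeration_iff_perm {s : Finset α} {l : List α} :
    IsEnumeration s l ↔ l.Perm s.toList := by
  constructor
  · rintro ⟨hl, hmem⟩
    exact (List.perm_ext_iff_of_nodup hl s.nodup_toList).2 fun x => by simp [hmem]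
  · intro h
    exact ⟨h.nodup_iff.2 s.nodup_toList, fun x => by simp [h.mem_iff]⟩

theorem IsEnumeration.length_eq {s : Finset α} {l : List α} (h : IsEnumeration s l) :
    l.length = s.card :=
  (isEnumeration_iff_perm.1 h).length_eq.trans s.length_toList

theorem card_isEnumeration (s : Finset α) : Nat.card {l // IsEnumeration s l} = s.card ! := by
  classical
  have hperm := List.nodup_permutations _ s.nodup_toList
  rw [Nat.card_congr ((Equiv.subtypeEquivRight fun l => by
      rw [isEnumeration_iff_perm, ← List.mem_permutations]).trans
    (hperm.getEquiv _).symm), Nat.card_fin, List.length_permutations, s.length_toList]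

def IsOrderedBlockPartition (s : Finset α) (k : ℕ) (L : List (List α)) : Prop :=
  L.length = k ∧ (∀ b ∈ L, 2 ≤ b.length) ∧ IsEnumeration s L.flatten

theorem IsOrderedBlockPartition.nodup {s : Finset α} {k : ℕ} {L : List (List α)}
    (h : IsOrderedBlockPartition s k L) : L.Nodup :=
  List.nodup_of_nodup_flatten h.2.2.1 fun b hb hnil => by simpa [hnil] using h.2.1 b hb

def splitOrderedBlockPartition (s : Finset α) (k : ℕ) :
    {L // IsOrderedBlockPartition s k L} → {l // IsEnumeration s l} × BlockSizes s.card k :=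
  fun L => (⟨L.1.flatten, L.2.2.2⟩, ⟨L.1.map List.length, by simp [L.2.1],
    by simpa using L.2.2.1, by rw [← List.length_flatten, L.2.2.2.length_eq]⟩)

theorem splitOrderedBlockPartition_bijective (s : Finset α) (k : ℕ) :
    Function.Bijective (splitOrderedBlockPartition s k) := by
  refine ⟨fun L L' h => Subtype.ext (List.eq_iff_flatten_eq.2 ?_), fun ⟨l, b⟩ => ?_⟩
  · simpa only [splitOrderedBlockPartition, Prod.ext_iff, Subtype.ext_iff] using h
  · have hsum : b.1.sum = l.1.length := b.2.2.2.trans l.2.length_eq.symm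
    have hflat := List.flatten_splitWrtCompositionAux hsum
    have hlen := List.map_length_splitWrtCompositionAux hsum.le
    refine ⟨⟨l.1.splitWrtCompositionAux b.1, ?_, fun c hc => ?_, by rw [hflat]; exact l.2⟩,
      ?_⟩
    · rw [List.length_splitWrtCompositionAux, b.2.1]
    · exact b.2.2.1 _ (hlen ▸ List.mem_map_of_mem hc)
    · exact Prod.ext (Subtype.ext hflat) (Subtype.ext hlen)

theorem card_isOrderedBlockPartition (s : Finset α) (k : ℕ) :
    Nat.card {L // IsOrderedBlockPartition s k L} = s.card ! * Nat.card (BlockSizes s.card k) := by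
  rw [Nat.card_congr (Equiv.ofBijective _ (splitOrderedBlockPartition_bijective s k)),
    Nat.card_prod, card_isEnumeration]

end OrderedBlockPartition

theorem IsOrderedBlockPartition.isIOPart_toFinset {m k : ℕ} {L : List (List ℕ)}
    (h : IsOrderedBlockPartition (Finset.Icc 1 m) k L) : IsIOPart m k L.toFinset := by
  have hLnd := h.nodup
  obtain ⟨hlen, hblk, hnd, hcov⟩ := h
  obtain ⟨hblknd, hdisj⟩ := List.nodup_flatten.1 hnd
  refine ⟨by rw [List.toFinset_card_of_nodup hLnd, hlen], fun b hb => ?_,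
    fun b hb b' hb' hne => ?_, fun x => by simp [← hcov x, List.mem_flatten]⟩
  · rw [List.mem_toFinset] at hb
    exact ⟨hblknd b hb, hblk b hb⟩
  · rw [List.mem_toFinset] at hb hb'
    exact hdisj.forall hb hb' hne

theorem IsIOPart.isOrderedBlockPartition_and_toFinset_eq_iff {m k : ℕ} {P : Finset (List ℕ)}
    (hP : IsIOPart m k P) (L : List (List ℕ)) :
    IsOrderedBlockPartition (Finset.Icc 1 m) k L ∧ L.toFinset = P ↔ IsEnumeration P L := by
  constructor
  · rintro ⟨hL, rfl⟩
    exact ⟨hL.nodup, fun b => List.mem_toFinset.symm⟩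
  · rintro ⟨hnd, hmem⟩
    obtain rfl : L.toFinset = P := Finset.ext fun b => by simp [hmem]
    obtain ⟨hcard, hblk, hdisj, hcov⟩ := hP
    simp only [List.mem_toFinset] at hblk hdisj hcov
    have hpair : L.Pairwise List.Disjoint :=
      hnd.pairwise_of_forall_ne fun b hb b' hb' hne x hx hx' => hdisj b hb b' hb' hne x hx hx'
    refine ⟨⟨?_, fun b hb => (hblk b hb).2,
      List.nodup_flatten.2 ⟨fun b hb => (hblk b hb).1, hpair⟩, fun x => ?_⟩, rfl⟩
    · rw [← List.toFinset_card_of_nodup hnd, hcard]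
    · simp [hcov, List.mem_flatten]

def toIOPart {m k : ℕ} (L : {L // IsOrderedBlockPartition (Finset.Icc 1 m) k L}) :
    {P : Finset (List ℕ) // IsIOPart m k P} :=
  ⟨L.1.toFinset, L.2.isIOPart_toFinset⟩

theorem card_toIOPart_fiber {m k : ℕ} (P : {P : Finset (List ℕ) // IsIOPart m k P}) :
    Nat.card {L // toIOPart L = P} = k ! := by
  rw [Nat.card_congr ((Equiv.subtypeEquivRight fun L => Subtype.ext_iff).trans
    ((Equiv.subtypeSubtypeEquivSubtypeInter _ _).trans
      (Equiv.subtypeEquivRight P.2.isOrderedBlockPartition_and_toFinset_eq_iff))),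
    card_isEnumeration, P.2.1]

theorem card_isIOPart_mul_factorial (m k : ℕ) :
    Nat.card {P // IsIOPart m k P} * k ! = m ! * Nat.card (BlockSizes m k) := by
  have h := Nat.card_eq_mul_of_card_fiber_eq (toIOPart (m := m)) (factorial_ne_zero k)
    card_toIOPart_fiber
  rwa [card_isOrderedBlockPartition, Nat.card_Icc, Nat.add_sub_cancel, eq_comm] at h

theorem stmt3_general (n k : ℕ) (hk1 : 1 ≤ k) (hk : k ≤ n - 1) :
    k * Nat.card {P : Finset (List ℕ) // IsIOPart (n + k - 1) k P} =
      n.factorial * (n - 2).choose (k - 1) * (n + k - 1).choose (k - 1) := by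
  obtain ⟨j, t, rfl, rfl⟩ : ∃ j t, k = j + 1 ∧ n = j + 2 + t :=
    ⟨k - 1, n - 1 - k, by omega, by omega⟩
  have key := card_isIOPart_mul_factorial (2 * (j + 1) + t) (j + 1)
  rw [card_blockSizes, show j + 1 + t - 1 = j + t by omega, ← Nat.choose_symm_add] at key
  have hfac : (2 * (j + 1) + t)! = (2 * (j + 1) + t).choose j * j ! * (j + 2 + t)! := by
    rw [← Nat.choose_mul_factorial_mul_factorial (n := 2 * (j + 1) + t) (k := j) (by omega)]
    congr 2
    omega
  rw [show j + 2 + t + (j + 1) - 1 = 2 * (j + 1) + t by omega,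
    show j + 2 + t - 2 = j + t by omega, Nat.add_sub_cancel]
  apply Nat.eq_of_mul_eq_mul_right (factorial_pos j)
  calc (j + 1) * Nat.card {P // IsIOPart (2 * (j + 1) + t) (j + 1) P} * j !
      = Nat.card {P // IsIOPart (2 * (j + 1) + t) (j + 1) P} * (j + 1)! := by
        rw [factorial_succ]; ring
    _ = (j + 2 + t)! * (j + t).choose j * (2 * (j + 1) + t).choose j * j ! := by
        rw [key, hfac]; ring

/-- The number of admissible internally ordered `k`-partitions of `{1,...,n+k-1}`
is `(1/k) · n! · C(n-2,k-1) · C(n+k-1,k-1)` (stated multiplicatively). -/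
theorem stmt3 (n k : ℕ) (hn : 2 ≤ n) (hk1 : 1 ≤ k) (hk : k ≤ n - 1) :
    k * Nat.card {P : Finset (List ℕ) // IsIOPart (n + k - 1) k P} =
      n.factorial * (n - 2).choose (k - 1) * (n + k - 1).choose (k - 1) :=
  stmt3_general n k hk1 hk
end

section
/- For integers n ≥ 2 and 1 ≤ k ≤ n-1, there is a bijection between the set of distinguished internally ordered k-partitions of {1,...,n+k-1} and the set of triples (I, σ, D) where I is a subset of {1,...,n+k-1} of cardinality n, σ is a permutation of I (equivalently a linear arrangement i_{σ(1)},...,i_{σ(n)} of I), and D is a subset of cardinality k-1 of the n-2 middle entries {i_{σ(2)},...,i_{σ(n-1)}} of that arrangement. -/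
/-- A triple `(I, σ, D)` is encoded as a pair `(L, D)`: `L` is a duplicate-free list
of length `n` with entries in `{1,...,n+k-1}` (the arrangement `i_{σ(1)},...,i_{σ(n)}`
of the `n`-element set `I = L.toFinset`), and `D` is a `(k-1)`-element subset of the
`n-2` middle entries of `L`. -/
def IsTriple (n k : ℕ) (p : List ℕ × Finset ℕ) : Prop :=
  p.1.Nodup ∧ p.1.length = n ∧ p.1.toFinset ⊆ Finset.Icc 1 (n + k - 1) ∧
  p.2 ⊆ ((p.1.drop 1).dropLast).toFinset ∧ p.2.card = k - 1

/-!
A distinguished partition with marked part `M` and remaining parts `B₁, …, B_{k-1}`, listed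
by increasing first entries, is sent to the arrangement `M ++ tail B₁ ++ ⋯ ++ tail B_{k-1}`
together with the set `D` of last entries of all these segments but the final one. The first
entries of the `Bᵢ` are exactly the `k - 1` elements missing from the arrangement, and the first
segment `M` has length at least two, so `D` lies among the middle entries. Conversely, cutting
the arrangement after each element of `D` recovers the segments, and prepending the missing
elements in increasing order to all segments but the first recovers the parts.
-/

namespace List

variable {α : Type*}

theorem Nodup.getLast_notMem_dropLast {l : List α} (hl : l.Nodup) (hne : l ≠ []) :
    l.getLast hne ∉ l.dropLast := by
  rw [← dropLast_append_getLast hne, nodup_append] at hl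
  exact fun h => hl.2.2 _ h _ (mem_singleton_self _) rfl

theorem nodup_of_nodup_flatten_s5 {L : List (List α)} (h : L.flatten.Nodup)
    (hne : ∀ l ∈ L, l ≠ []) : L.Nodup :=
  (nodup_flatten.1 h).2.imp_of_mem fun ha _ hab hEq => by
    obtain ⟨x, hx⟩ := exists_mem_of_ne_nil _ (hne _ ha)
    exact hab hx (hEq ▸ hx)

theorem headI_cons_tail [Inhabited α] {l : List α} (hl : l ≠ []) : l.headI :: l.tail = l := by
  obtain ⟨x, t, rfl⟩ := exists_cons_of_ne_nil hl
  rfl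

theorem headI_le_headI_of_le [LinearOrder α] [Inhabited α] {a b : List α} (ha : a ≠ [])
    (hb : b ≠ []) (h : a ≤ b) : a.headI ≤ b.headI := by
  obtain ⟨x, a, rfl⟩ := exists_cons_of_ne_nil ha
  obtain ⟨y, b, rfl⟩ := exists_cons_of_ne_nil hb
  rcases h.lt_or_eq with h | h
  · exact head_le_of_lt h
  · exact (head_eq_of_cons_eq h).le

theorem flatten_cons_zipWith_cons_perm (s : List α) {cs : List α} {ts : List (List α)}
    (h : cs.length = ts.length) : (s :: zipWith cons cs ts).flatten ~ cs ++ (s :: ts).flatten := by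
  suffices (zipWith cons cs ts).flatten ~ cs ++ ts.flatten by
    simpa only [flatten_cons] using (this.append_left s).trans (perm_append_comm_assoc _ _ _)
  induction cs generalizing ts with
  | nil => simp [length_eq_zero_iff.1 h.symm]
  | cons c cs ih =>
    obtain _ | ⟨t, ts⟩ := ts
    · simp at h
    · simp only [zipWith_cons_cons, flatten_cons, cons_append, perm_cons]
      exact ((ih (by simpa using h)).append_left t).trans (perm_append_comm_assoc _ _ _)

theorem zipWith_cons_map_headI_map_tail [Inhabited α] {O : List (List α)}
    (hne : ∀ o ∈ O, o ≠ []) : zipWith cons (O.map headI) (O.map tail) = O := by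
  rw [zipWith_map, zipWith_self]
  conv_rhs => rw [← map_id O]
  exact map_congr_left fun o ho => headI_cons_tail (hne o ho)

theorem exists_of_mem_zipWith_cons {cs : List α} {ts : List (List α)} {l : List α}
    (h : l ∈ zipWith cons cs ts) : ∃ c ∈ cs, ∃ t ∈ ts, l = c :: t := by
  rw [← map_uncurry_zip_eq_zipWith] at h
  obtain ⟨⟨c, t⟩, hct, rfl⟩ := mem_map.1 h
  exact ⟨c, (of_mem_zip hct).1, t, (of_mem_zip hct).2, rfl⟩

theorem map_tail_zipWith_cons {cs : List α} {ts : List (List α)} (h : ts.length ≤ cs.length) :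
    (zipWith cons cs ts).map tail = ts := by
  rw [← map_uncurry_zip_eq_zipWith, map_map]
  exact map_snd_zip h

theorem pairwise_zipWith_cons [LinearOrder α] {cs : List α} {ts : List (List α)}
    (h : cs.Pairwise (· < ·)) (hlen : cs.length ≤ ts.length) :
    (zipWith cons cs ts).Pairwise (· < ·) := by
  rw [← map_uncurry_zip_eq_zipWith, pairwise_map]
  rw [← map_fst_zip hlen, pairwise_map] at h
  exact h.imp Lex.rel

theorem nodup_sort_sdiff_toFinset_append [LinearOrder α] (S : Finset α) {L : List α}
    (hL : L.Nodup) : ((S \ L.toFinset).sort ++ L).Nodup := by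
  refine nodup_append.2 ⟨Finset.sort_nodup _ _, hL, ?_⟩
  rintro x hx _ hy rfl
  exact (Finset.mem_sdiff.1 (Finset.mem_sort _ |>.1 hx)).2 (mem_toFinset.2 hy)

theorem toFinset_sort_sdiff_toFinset_append [LinearOrder α] {S : Finset α} {L : List α}
    (hS : L.toFinset ⊆ S) : ((S \ L.toFinset).sort ++ L).toFinset = S := by
  rw [toFinset_append, Finset.sort_toFinset, Finset.sdiff_union_of_subset hS]

def cutPoints (segs : List (List α)) : List α := segs.dropLast.filterMap getLast?

theorem cutPoints_concat_cons (s : List α) (d : α) {segs : List (List α)}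
    (hsegs : segs ≠ []) : cutPoints ((s ++ [d]) :: segs) = d :: cutPoints segs := by
  simp [cutPoints, dropLast_cons_of_ne_nil hsegs]

theorem cutPoints_cons_cons (x : α) {s : List α} (hs : s ≠ []) (segs : List (List α)) :
    cutPoints ((x :: s) :: segs) = cutPoints (s :: segs) := by
  rcases eq_or_ne segs [] with rfl | hsegs
  · rfl
  · obtain ⟨s, d, rfl⟩ := (eq_nil_or_concat s).resolve_left hs
    rw [concat_eq_append, ← cons_append, cutPoints_concat_cons _ _ hsegs,
      cutPoints_concat_cons _ _ hsegs]

theorem mem_dropLast_flatten_of_mem_cutPoints {segs : List (List α)} {x : α}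
    (hne : ∀ s ∈ segs, s ≠ []) (hx : x ∈ cutPoints segs) : x ∈ segs.flatten.dropLast := by
  obtain ⟨s, hs, hsx⟩ := mem_filterMap.1 hx
  have hsegs : segs ≠ [] := by rintro rfl; simp at hs
  rw [← dropLast_append_getLast hsegs, flatten_append, flatten_singleton,
    dropLast_append_of_ne_nil (hne _ (getLast_mem hsegs))]
  exact mem_append_left _ (mem_flatten_of_mem hs (mem_of_getLast? hsx))

theorem mem_tail_dropLast_flatten_of_mem_cutPoints {segs : List (List α)} {x : α}
    (hne : ∀ s ∈ segs, s ≠ []) (hhead : 2 ≤ segs.headI.length) (hx : x ∈ cutPoints segs) :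
    x ∈ (segs.flatten.drop 1).dropLast := by
  obtain _ | ⟨_ | ⟨a, _ | ⟨b, s⟩⟩, rest⟩ := segs
  · simp [cutPoints] at hx
  · simp at hhead
  · simp at hhead
  rw [cutPoints_cons_cons _ (cons_ne_nil _ _)] at hx
  refine mem_dropLast_flatten_of_mem_cutPoints ?_ hx
  simp only [mem_cons, forall_eq_or_imp] at hne ⊢
  exact ⟨cons_ne_nil _ _, hne.2⟩

theorem length_cutPoints {segs : List (List α)} (hne : ∀ s ∈ segs, s ≠ []) :
    (cutPoints segs).length = segs.length - 1 := by
  rw [cutPoints, length_filterMap_eq_countP, countP_eq_length.2, length_dropLast]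
  intro s hs
  simpa [getLast?_isSome] using hne s (dropLast_subset _ hs)

theorem nodup_cutPoints {segs : List (List α)} (h : segs.flatten.Nodup) :
    (cutPoints segs).Nodup :=
  pairwise_filterMap.2 <| ((nodup_flatten.1 h).2.sublist (dropLast_sublist _)).imp
    fun hst _ hx _ hy hxy => hst (mem_of_getLast? hx) (hxy ▸ mem_of_getLast? hy)

-- `([] : List (List α)).headI = []`, so an entry outside `p` at the end opens the final segment.
def splitAfter (p : α → Bool) : List α → List (List α)
  | [] => []
  | x :: xs =>
    if p x then [x] :: splitAfter p xs
    else (x :: (splitAfter p xs).headI) :: (splitAfter p xs).tail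

variable {p : α → Bool}

theorem ne_nil_of_mem_splitAfter {L s : List α} (hs : s ∈ splitAfter p L) : s ≠ [] := by
  induction L with
  | nil => simp [splitAfter] at hs
  | cons x xs ih =>
    rw [splitAfter] at hs
    split at hs <;> rcases mem_cons.1 hs with rfl | hs
    · exact cons_ne_nil _ _
    · exact ih hs
    · exact cons_ne_nil _ _
    · exact ih (mem_of_mem_tail hs)

theorem flatten_splitAfter (p : α → Bool) (L : List α) : (splitAfter p L).flatten = L := by
  induction L with
  | nil => rfl
  | cons x xs ih =>
    conv_rhs => rw [← ih]
    rw [splitAfter]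
    split
    · rfl
    · cases splitAfter p xs <;> rfl

theorem splitAfter_ne_nil {L : List α} (hL : L ≠ []) : splitAfter p L ≠ [] :=
  fun h => hL (by rw [← flatten_splitAfter p L, h, flatten_nil])

theorem splitAfter_of_forall_not {L : List α} (hL : L ≠ []) (h : ∀ x ∈ L, p x = false) :
    splitAfter p L = [L] := by
  induction L with
  | nil => exact absurd rfl hL
  | cons x xs ih =>
    rw [splitAfter, if_neg (by simp [h x mem_cons_self])]
    rcases eq_or_ne xs [] with rfl | hxs
    · rfl
    · rw [ih hxs fun y hy => h y (mem_cons_of_mem x hy)]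
      rfl

theorem splitAfter_append_cons {s : List α} (d : α) (t : List α) (hs : ∀ x ∈ s, p x = false)
    (hd : p d) : splitAfter p (s ++ d :: t) = (s ++ [d]) :: splitAfter p t := by
  induction s with
  | nil => simp [splitAfter, hd]
  | cons x s ih =>
    rw [cons_append, splitAfter, if_neg (by simp [hs x mem_cons_self]),
      ih fun y hy => hs y (mem_cons_of_mem x hy)]
    rfl

theorem two_le_length_headI_splitAfter {x : α} {xs : List α} (hx : p x = false)
    (hxs : xs ≠ []) : 2 ≤ (splitAfter p (x :: xs)).headI.length := by
  obtain ⟨s, segs, h⟩ := ne_nil_iff_exists_cons.1 (splitAfter_ne_nil (p := p) hxs)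
  have hs : s ≠ [] := ne_nil_of_mem_splitAfter (h ▸ mem_cons_self)
  simp only [splitAfter, hx, h, Bool.false_eq_true, if_false, headI_cons, length_cons]
  have := length_pos_iff.2 hs
  omega

theorem cutPoints_splitAfter {L : List α} (h : ∀ x ∈ L.getLast?, p x = false) :
    cutPoints (splitAfter p L) = L.filter p := by
  induction L with
  | nil => rfl
  | cons x xs ih =>
    rcases eq_or_ne xs [] with rfl | hxs
    · simp [splitAfter, h x rfl, cutPoints]
    rw [getLast?_cons, getLast?_eq_some_getLast hxs] at h
    obtain ⟨s, segs, hsplit⟩ := ne_nil_iff_exists_cons.1 (splitAfter_ne_nil (p := p) hxs)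
    have hs : s ≠ [] := ne_nil_of_mem_splitAfter (hsplit ▸ mem_cons_self)
    have ih := ih (by simpa [getLast?_eq_some_getLast hxs] using h)
    rw [hsplit] at ih
    by_cases hx : p x
    · rw [splitAfter, if_pos hx, hsplit, ← nil_append [x],
        cutPoints_concat_cons _ _ (cons_ne_nil _ _), ih]
      simp [hx]
    · rw [splitAfter, if_neg hx, hsplit, headI_cons, tail_cons, cutPoints_cons_cons _ hs, ih]
      simp [hx]

theorem splitAfter_flatten {segs : List (List α)} (hne : ∀ s ∈ segs, s ≠ [])
    (hnd : segs.flatten.Nodup) (hp : ∀ x ∈ segs.flatten, p x ↔ x ∈ cutPoints segs) :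
    splitAfter p segs.flatten = segs := by
  induction segs with
  | nil => rfl
  | cons s rest ih =>
    obtain ⟨s, d, rfl⟩ := (eq_nil_or_concat s).resolve_left (hne _ mem_cons_self)
    rw [concat_eq_append] at hp hnd ⊢
    rcases eq_or_ne rest [] with rfl | hrest
    · rw [flatten_singleton] at hp ⊢
      refine splitAfter_of_forall_not (by simp) fun x hx => ?_
      simpa [cutPoints] using (hp x hx).not
    rw [cutPoints_concat_cons _ _ hrest] at hp
    rw [flatten_cons, append_assoc, singleton_append] at hp hnd ⊢
    obtain ⟨-, hnd', hdisj⟩ := nodup_append.1 hnd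
    have hd : d ∉ rest.flatten := (nodup_cons.1 hnd').1
    rw [splitAfter_append_cons d _ ?_ ((hp d (by simp)).2 mem_cons_self),
      ih (fun t ht => hne t (mem_cons_of_mem _ ht)) (nodup_cons.1 hnd').2 ?_]
    · intro x hx
      rw [hp x (mem_append_right _ (mem_cons_of_mem _ hx)), mem_cons]
      exact or_iff_right fun h => hd (h ▸ hx)
    · intro x hx
      refine Bool.eq_false_iff.2 fun hpx => ?_
      rcases mem_cons.1 ((hp x (mem_append_left _ hx)).1 hpx) with rfl | h
      · exact hdisj x hx x mem_cons_self rfl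
      · exact hdisj x hx x (mem_cons_of_mem _ (dropLast_subset _
          (mem_dropLast_flatten_of_mem_cutPoints (fun t ht => hne t (mem_cons_of_mem _ ht)) h))) rfl

end List

open List

theorem isIOPart_toFinset_iff {m k : ℕ} {ps : List (List ℕ)} (hps : ps.Nodup) :
    IsIOPart m k ps.toFinset ↔ ps.length = k ∧ (∀ l ∈ ps, 2 ≤ l.length) ∧
      ps.flatten.Nodup ∧ ps.flatten.toFinset = Finset.Icc 1 m := by
  have : Std.Symm (α := List ℕ) List.Disjoint := ⟨fun _ _ h => h.symm⟩
  have hdisj : (∀ l ∈ ps, ∀ l' ∈ ps, l ≠ l' → ∀ x ∈ l, x ∉ l') ↔ ps.Pairwise List.Disjoint :=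
    ⟨hps.pairwise_of_forall_ne, fun h _ hl _ hl' hne => h.forall hl hl' hne⟩
  simp only [IsIOPart, toFinset_card_of_nodup hps, mem_toFinset, hdisj, nodup_flatten,
    Finset.ext_iff, mem_flatten]
  constructor
  · rintro ⟨hk, hl, hd, hc⟩
    exact ⟨hk, fun l h => (hl l h).2, ⟨fun l h => (hl l h).1, hd⟩, fun x => (hc x).symm⟩
  · rintro ⟨hk, hl, ⟨hn, hd⟩, hc⟩
    exact ⟨hk, fun l h => ⟨hn l h, hl l h⟩, hd, fun x => (hc x).symm⟩

-- Lexicographic order: since the parts are disjoint, this orders them by their first entries.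
def otherParts (P : Finset (List ℕ)) (M : List ℕ) : List (List ℕ) := (P.erase M).sort

def segmentsOf (P : Finset (List ℕ)) (M : List ℕ) : List (List ℕ) :=
  M :: (otherParts P M).map tail

def toTriple (P : Finset (List ℕ)) (M : List ℕ) : List ℕ × Finset ℕ :=
  ((segmentsOf P M).flatten, (cutPoints (segmentsOf P M)).toFinset)

def partsOf (m : ℕ) (L : List ℕ) (D : Finset ℕ) : List (List ℕ) :=
  (splitAfter (· ∈ D) L).headI ::
    zipWith cons ((Finset.Icc 1 m \ L.toFinset).sort) (splitAfter (· ∈ D) L).tail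

def toMarkedPartition (m : ℕ) (L : List ℕ) (D : Finset ℕ) : Finset (List ℕ) × List ℕ :=
  ((partsOf m L D).toFinset, (splitAfter (· ∈ D) L).headI)

section toTriple

variable {m k : ℕ} {P : Finset (List ℕ)} {M : List ℕ}

theorem nodup_cons_otherParts : (M :: otherParts P M).Nodup :=
  nodup_cons.2 ⟨fun h => by simp [otherParts] at h, Finset.sort_nodup _ _⟩

theorem toFinset_cons_otherParts (hM : M ∈ P) : (M :: otherParts P M).toFinset = P := by
  rw [toFinset_cons, otherParts, Finset.sort_toFinset, Finset.insert_erase hM]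

theorem IsIOPart.cons_otherParts_spec (hP : IsIOPart m k P) (hM : M ∈ P) :
    (M :: otherParts P M).length = k ∧ (∀ l ∈ M :: otherParts P M, 2 ≤ l.length) ∧
      (M :: otherParts P M).flatten.Nodup ∧
      (M :: otherParts P M).flatten.toFinset = Finset.Icc 1 m :=
  (isIOPart_toFinset_iff nodup_cons_otherParts).1 (by rwa [toFinset_cons_otherParts hM])

theorem IsIOPart.two_le_length_of_mem (hP : IsIOPart m k P) {l : List ℕ} (hl : l ∈ P) :
    2 ≤ l.length :=
  (hP.2.1 l hl).2

theorem mem_of_mem_otherParts {o : List ℕ} (ho : o ∈ otherParts P M) : o ∈ P :=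
  Finset.mem_of_mem_erase (Finset.mem_sort _ |>.1 ho)

theorem IsIOPart.ne_nil_of_mem_otherParts (hP : IsIOPart m k P) :
    ∀ o ∈ otherParts P M, o ≠ [] := fun _ ho =>
  ne_nil_of_length_pos (by have := hP.two_le_length_of_mem (mem_of_mem_otherParts ho); omega)

theorem IsIOPart.ne_nil_of_mem_segmentsOf (hP : IsIOPart m k P) (hM : M ∈ P) :
    ∀ s ∈ segmentsOf P M, s ≠ [] := by
  intro s hs
  rcases mem_cons.1 hs with rfl | hs
  · exact ne_nil_of_length_pos (by have := hP.two_le_length_of_mem hM; omega)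
  · obtain ⟨o, ho, rfl⟩ := mem_map.1 hs
    have := hP.two_le_length_of_mem (mem_of_mem_otherParts ho)
    exact ne_nil_of_length_pos (by rw [length_tail]; omega)

theorem IsIOPart.flatten_cons_otherParts_perm (hP : IsIOPart m k P) :
    (M :: otherParts P M).flatten ~ (otherParts P M).map headI ++ (segmentsOf P M).flatten := by
  conv_lhs => rw [← zipWith_cons_map_headI_map_tail hP.ne_nil_of_mem_otherParts]
  exact flatten_cons_zipWith_cons_perm M (by simp)

theorem IsIOPart.isTriple_toTriple {n : ℕ} (hP : IsIOPart (n + k - 1) k P) (hM : M ∈ P) :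
    IsTriple n k (toTriple P M) := by
  obtain ⟨hlen, -, hnd, hcov⟩ := hP.cons_otherParts_spec hM
  have hne := hP.ne_nil_of_mem_segmentsOf hM
  have hperm := hP.flatten_cons_otherParts_perm (M := M)
  have hLnd : (segmentsOf P M).flatten.Nodup := (nodup_append.1 (hperm.nodup_iff.1 hnd)).2.1
  have hcard := toFinset_card_of_nodup hnd
  rw [hcov, Nat.card_Icc] at hcard
  unfold toTriple IsTriple
  dsimp only
  refine ⟨hLnd, ?_, fun x hx => ?_, fun x hx => ?_, ?_⟩
  · have := hperm.length_eq
    simp only [length_cons, length_append, length_map] at this hlen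
    omega
  · rw [← hcov, mem_toFinset, hperm.mem_iff]
    exact mem_append_right _ (mem_toFinset.1 hx)
  · rw [mem_toFinset] at hx ⊢
    exact mem_tail_dropLast_flatten_of_mem_cutPoints hne (hP.two_le_length_of_mem hM) hx
  · rw [toFinset_card_of_nodup (nodup_cutPoints hLnd), length_cutPoints hne, ← hlen]
    simp [segmentsOf]

theorem IsIOPart.toMarkedPartition_toTriple (hP : IsIOPart m k P) (hM : M ∈ P) :
    toMarkedPartition m (toTriple P M).1 (toTriple P M).2 = (P, M) := by
  obtain ⟨-, -, hnd, hcov⟩ := hP.cons_otherParts_spec hM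
  have hO := hP.ne_nil_of_mem_otherParts (M := M)
  have hperm := hP.flatten_cons_otherParts_perm (M := M)
  obtain ⟨hHnd, hLnd, hdisj⟩ := nodup_append.1 (hperm.nodup_iff.1 hnd)
  have hsplit : splitAfter (· ∈ (toTriple P M).2) (toTriple P M).1 = segmentsOf P M :=
    splitAfter_flatten (hP.ne_nil_of_mem_segmentsOf hM) hLnd (by simp [toTriple])
  have hcompl : Finset.Icc 1 m \ (toTriple P M).1.toFinset =
      ((otherParts P M).map headI).toFinset := by
    rw [← hcov, toFinset_eq_of_perm _ _ hperm, toFinset_append]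
    exact Finset.union_sdiff_cancel_right <| Finset.disjoint_left.2 fun x hx hy =>
      hdisj x (mem_toFinset.1 hx) x (mem_toFinset.1 hy) rfl
  have hsort : (Finset.Icc 1 m \ (toTriple P M).1.toFinset).sort = (otherParts P M).map headI := by
    rw [hcompl, toFinset_sort _ hHnd]
    exact pairwise_map.2 <| (Finset.pairwise_sort _ _).imp_of_mem fun ha hb =>
      headI_le_headI_of_le (hO _ ha) (hO _ hb)
  simp only [toMarkedPartition, partsOf, hsplit, hsort]
  rw [segmentsOf, headI_cons, tail_cons, zipWith_cons_map_headI_map_tail hO,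
    toFinset_cons_otherParts hM]

end toTriple

section toMarkedPartition

variable {n k : ℕ} {L : List ℕ} {D : Finset ℕ}

theorem IsTriple.exists_eq_cons (hT : IsTriple n k (L, D)) (hn : 2 ≤ n) :
    ∃ c t, L = c :: t ∧ t ≠ [] ∧ c ∉ D ∧ ∀ x ∈ L.getLast?, x ∉ D := by
  obtain ⟨hnd, hlen, -, hD, -⟩ := hT
  obtain _ | ⟨c, _ | ⟨x, t⟩⟩ := L
  · simp at hlen; omega
  · simp at hlen; omega
  refine ⟨c, x :: t, rfl, cons_ne_nil _ _, fun hc => ?_, fun y hy hyD => ?_⟩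
  · simpa using (nodup_cons.1 hnd).1 (dropLast_subset _ (mem_toFinset.1 (hD hc)))
  · rw [getLast?_cons_cons, Option.mem_def, getLast?_eq_some_getLast (cons_ne_nil _ _),
      Option.some.injEq] at hy
    subst hy
    exact (nodup_cons.1 hnd).2.getLast_notMem_dropLast _ (by simpa using hD hyD)

theorem IsTriple.ne_nil (hT : IsTriple n k (L, D)) (hn : 0 < n) : L ≠ [] :=
  ne_nil_of_length_pos (by rw [hT.2.1]; omega)

theorem IsTriple.toFinset_filter (hT : IsTriple n k (L, D)) :
    (L.filter (· ∈ D)).toFinset = D := by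
  ext x
  simp only [mem_toFinset, mem_filter, decide_eq_true_eq, and_iff_right_iff_imp]
  exact fun hx => drop_subset _ _ (dropLast_subset _ (mem_toFinset.1 (hT.2.2.2.1 hx)))

theorem IsTriple.cutPoints_splitAfter (hT : IsTriple n k (L, D)) (hn : 2 ≤ n) :
    cutPoints (splitAfter (· ∈ D) L) = L.filter (· ∈ D) := by
  obtain ⟨c, t, rfl, -, -, hlast⟩ := hT.exists_eq_cons hn
  exact List.cutPoints_splitAfter fun x hx => by simpa using hlast x hx

theorem IsTriple.two_le_length_headI_splitAfter (hT : IsTriple n k (L, D)) (hn : 2 ≤ n) :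
    2 ≤ (splitAfter (· ∈ D) L).headI.length := by
  obtain ⟨c, t, rfl, ht, hc, -⟩ := hT.exists_eq_cons hn
  exact List.two_le_length_headI_splitAfter (by simpa using hc) ht

theorem IsTriple.one_le_k (hT : IsTriple n k (L, D)) (hn : 0 < n) : 1 ≤ k := by
  have := Finset.card_le_card hT.2.2.1
  rw [toFinset_card_of_nodup hT.1, hT.2.1, Nat.card_Icc] at this
  omega

theorem IsTriple.length_splitAfter (hT : IsTriple n k (L, D)) (hn : 2 ≤ n) :
    (splitAfter (· ∈ D) L).length = k := by
  have h := congrArg length (hT.cutPoints_splitAfter hn)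
  rw [length_cutPoints fun _ => ne_nil_of_mem_splitAfter,
    ← toFinset_card_of_nodup (hT.1.filter _), hT.toFinset_filter, hT.2.2.2.2] at h
  have := length_pos_iff.2 (splitAfter_ne_nil (p := (· ∈ D)) (hT.ne_nil (by omega)))
  have := hT.one_le_k (by omega)
  omega

theorem IsTriple.length_sort_sdiff (hT : IsTriple n k (L, D)) :
    (Finset.Icc 1 (n + k - 1) \ L.toFinset).sort.length = k - 1 := by
  rw [Finset.length_sort, Finset.card_sdiff_of_subset hT.2.2.1, Nat.card_Icc,
    toFinset_card_of_nodup hT.1, hT.2.1]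
  omega

theorem IsTriple.flatten_partsOf_perm (hT : IsTriple n k (L, D)) (hn : 2 ≤ n) :
    (partsOf (n + k - 1) L D).flatten ~ (Finset.Icc 1 (n + k - 1) \ L.toFinset).sort ++ L := by
  have h := flatten_cons_zipWith_cons_perm (splitAfter (· ∈ D) L).headI
    (cs := (Finset.Icc 1 (n + k - 1) \ L.toFinset).sort) (ts := (splitAfter (· ∈ D) L).tail)
    (by rw [hT.length_sort_sdiff, length_tail, hT.length_splitAfter hn])
  rwa [headI_cons_tail (splitAfter_ne_nil (hT.ne_nil (by omega))), flatten_splitAfter] at h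

theorem IsTriple.nodup_flatten_partsOf (hT : IsTriple n k (L, D)) (hn : 2 ≤ n) :
    (partsOf (n + k - 1) L D).flatten.Nodup :=
  (hT.flatten_partsOf_perm hn).nodup_iff.2 (nodup_sort_sdiff_toFinset_append _ hT.1)

theorem IsTriple.two_le_length_of_mem_partsOf (hT : IsTriple n k (L, D)) (hn : 2 ≤ n) :
    ∀ l ∈ partsOf (n + k - 1) L D, 2 ≤ l.length := by
  intro l hl
  rcases mem_cons.1 hl with rfl | hl
  · exact hT.two_le_length_headI_splitAfter hn
  · obtain ⟨c, -, t, ht, rfl⟩ := exists_of_mem_zipWith_cons hl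
    have := length_pos_iff.2 (ne_nil_of_mem_splitAfter (mem_of_mem_tail ht))
    rw [length_cons]
    omega

theorem IsTriple.nodup_partsOf (hT : IsTriple n k (L, D)) (hn : 2 ≤ n) :
    (partsOf (n + k - 1) L D).Nodup :=
  nodup_of_nodup_flatten_s5 (hT.nodup_flatten_partsOf hn) fun l hl =>
    ne_nil_of_length_pos (by have := hT.two_le_length_of_mem_partsOf hn l hl; omega)

theorem IsTriple.isIOPart_partsOf (hT : IsTriple n k (L, D)) (hn : 2 ≤ n) :
    IsIOPart (n + k - 1) k (partsOf (n + k - 1) L D).toFinset := by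
  refine (isIOPart_toFinset_iff (hT.nodup_partsOf hn)).2 ⟨?_, hT.two_le_length_of_mem_partsOf hn,
    hT.nodup_flatten_partsOf hn, ?_⟩
  · rw [partsOf, length_cons, length_zipWith, hT.length_sort_sdiff, length_tail,
      hT.length_splitAfter hn]
    have := hT.one_le_k (by omega)
    omega
  · rw [toFinset_eq_of_perm _ _ (hT.flatten_partsOf_perm hn)]
    exact toFinset_sort_sdiff_toFinset_append hT.2.2.1

theorem IsTriple.toTriple_toMarkedPartition (hT : IsTriple n k (L, D)) (hn : 2 ≤ n) :
    toTriple (toMarkedPartition (n + k - 1) L D).1 (toMarkedPartition (n + k - 1) L D).2 =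
      (L, D) := by
  set segs := splitAfter (· ∈ D) L
  set cs := (Finset.Icc 1 (n + k - 1) \ L.toFinset).sort
  have hlen : cs.length = segs.tail.length := by
    rw [hT.length_sort_sdiff, length_tail, hT.length_splitAfter hn]
  have hnd : (segs.headI :: zipWith cons cs segs.tail).Nodup := hT.nodup_partsOf hn
  have hother : otherParts (segs.headI :: zipWith cons cs segs.tail).toFinset segs.headI =
      zipWith cons cs segs.tail := by
    rw [otherParts, toFinset_cons, Finset.erase_insert (mt mem_toFinset.1 (nodup_cons.1 hnd).1),
      toFinset_sort _ (nodup_cons.1 hnd).2]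
    exact (pairwise_zipWith_cons (sortedLT_iff_pairwise.1 (Finset.sortedLT_sort _)) hlen.le).imp
      le_of_lt
  have hsegs : segmentsOf (segs.headI :: zipWith cons cs segs.tail).toFinset segs.headI = segs := by
    rw [segmentsOf, hother, map_tail_zipWith_cons hlen.ge,
      headI_cons_tail (splitAfter_ne_nil (hT.ne_nil (by omega)))]
  rw [toMarkedPartition, partsOf, toTriple, hsegs, flatten_splitAfter, hT.cutPoints_splitAfter hn,
    hT.toFinset_filter]

end toMarkedPartition

theorem stmt5_general (n k : ℕ) (hn : 2 ≤ n) :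
    Nonempty ({p : Finset (List ℕ) × List ℕ //
        IsIOPart (n + k - 1) k p.1 ∧ p.2 ∈ p.1} ≃
      {p : List ℕ × Finset ℕ // IsTriple n k p}) :=
  ⟨{ toFun := fun p => ⟨toTriple p.1.1 p.1.2, p.2.1.isTriple_toTriple p.2.2⟩
     invFun := fun t => ⟨toMarkedPartition (n + k - 1) t.1.1 t.1.2,
       t.2.isIOPart_partsOf hn, mem_toFinset.2 mem_cons_self⟩
     left_inv := fun p => Subtype.ext (p.2.1.toMarkedPartition_toTriple p.2.2)
     right_inv := fun t => Subtype.ext (t.2.toTriple_toMarkedPartition hn) }⟩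

/-- Bijection between distinguished internally ordered `k`-partitions of
`{1,...,n+k-1}` and triples `(I, σ, D)`. -/
theorem stmt5 (n k : ℕ) (hn : 2 ≤ n) (hk1 : 1 ≤ k) (hk : k ≤ n - 1) :
    Nonempty ({p : Finset (List ℕ) × List ℕ //
        IsIOPart (n + k - 1) k p.1 ∧ p.2 ∈ p.1} ≃
      {p : List ℕ × Finset ℕ // IsTriple n k p}) :=
  stmt5_general n k hn
end
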